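/- arXiv:2503.01110 — 9 statements merged into one kernel-verified Lean document; each statement's English description precedes it below -/
import Mathlib

section
/- Let f : ℤ^n → ℝ ∪ {+∞} be an M-convex function. A vector x* ∈ dom f is a minimizer of f (i.e., f(x*) ≤ f(y) for all y ∈ ℤ^n) if and only if f(x* + χ_i − χ_j) ≥ f(x*) for all i, j ∈ N. -/
noncomputable section

open scoped BigOperators

/-- The `i`-th unit vector in `ℤ^n`. -/
def chi {n : ℕ} (i : Fin n) : Fin n → ℤ := fun k => if k = i then 1 else 0

/-- The function never takes the value `-∞`, i.e. its codomain is `ℝ ∪ {+∞}`. -/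
def NoBot {n : ℕ} (f : (Fin n → ℤ) → EReal) : Prop := ∀ x, f x ≠ ⊥

/-- M-convexity: nonempty effective domain together with the exchange axiom (M-EXC). -/
def MConvexFn {n : ℕ} (f : (Fin n → ℤ) → EReal) : Prop :=
  (∃ x, f x ≠ ⊤) ∧
  ∀ x y : Fin n → ℤ, f x ≠ ⊤ → f y ≠ ⊤ →
    ∀ i : Fin n, y i < x i →
      ∃ j : Fin n, x j < y j ∧
        f (x - chi i + chi j) + f (y + chi i - chi j) ≤ f x + f y

/-- The slopeZ `f'(x; i, j) = f(x + χ_i - χ_j) - f(x)`. -/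
def slopeZ {n : ℕ} (f : (Fin n → ℤ) → EReal) (x : Fin n → ℤ) (i j : Fin n) : EReal :=
  f (x + chi i - chi j) - f x

/-- `φ(x) = min_{i, j ∈ N} f'(x; i, j)`. -/
def phi {n : ℕ} (f : (Fin n → ℤ) → EReal) (x : Fin n → ℤ) : EReal :=
  ⨅ i : Fin n, ⨅ j : Fin n, slopeZ f x i j

/-!
Necessity is trivial. For sufficiency, take `y ∈ dom f` with `y ≠ x` and pick `i` with
`y i < x i` (if `y ≥ x`, the exchange axiom applied to `y, x` gives one). The exchange
axiom at `x, y, i` yields `j` with `x j < y j` and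
`f(x - χ_i + χ_j) + f(y + χ_i - χ_j) ≤ f x + f y`; by local optimality the first term is
at least `f x`, so `f(y + χ_i - χ_j) ≤ f y`, and `y + χ_i - χ_j` is strictly closer to `x`
in the `ℓ₁`-distance. Induction on that distance gives `f x ≤ f y`.
-/

lemma sum_natAbs_sub_add_chi_sub_chi_lt {n : ℕ} {x y : Fin n → ℤ} {i j : Fin n}
    (hi : y i < x i) (hj : x j < y j) :
    ∑ k, (x k - (y + chi i - chi j) k).natAbs < ∑ k, (x k - y k).natAbs := by
  have hij : i ≠ j := by rintro rfl; omega
  apply Finset.sum_lt_sum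
  · intro k _
    simp only [chi, Pi.add_apply, Pi.sub_apply]
    split_ifs <;> subst_vars <;> omega
  · refine ⟨i, Finset.mem_univ i, ?_⟩
    simp only [chi, Pi.add_apply, Pi.sub_apply, if_true, if_neg hij]
    omega

namespace MConvexFn

variable {n : ℕ} {f : (Fin n → ℤ) → EReal}

lemma exists_lt_of_ne (hM : MConvexFn f) {x y : Fin n → ℤ} (hx : f x ≠ ⊤) (hy : f y ≠ ⊤)
    (hxy : x ≠ y) : ∃ i, y i < x i := by
  by_contra! hle
  obtain ⟨i, hi⟩ := Function.ne_iff.mp hxy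
  obtain ⟨j, hj, -⟩ := hM.2 y x hy hx i ((hle i).lt_of_ne hi)
  exact (hle j).not_gt hj

lemma exists_closer_le (hM : MConvexFn f) {x y : Fin n → ℤ} {a : ℝ} (hfx : f x = a)
    (hloc : ∀ i j, f x ≤ f (x + chi i - chi j)) (hy : f y ≠ ⊤) (hxy : x ≠ y) :
    ∃ y', ∑ k, (x k - y' k).natAbs < ∑ k, (x k - y k).natAbs ∧ f y' ≤ f y := by
  obtain ⟨i, hi⟩ := hM.exists_lt_of_ne (hfx ▸ EReal.coe_ne_top a) hy hxy
  obtain ⟨j, hj, hexc⟩ := hM.2 x y (hfx ▸ EReal.coe_ne_top a) hy i hi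
  refine ⟨y + chi i - chi j, sum_natAbs_sub_add_chi_sub_chi_lt hi hj, ?_⟩
  have hx_le : f x ≤ f (x - chi i + chi j) := by
    simpa only [sub_add_eq_add_sub] using hloc j i
  have h : f x + f (y + chi i - chi j) ≤ f x + f y :=
    (add_le_add_left hx_le _).trans hexc
  rw [hfx] at h
  exact (EReal.addLECancellable_coe a).add_le_add_iff_left.mp h

theorem le_of_forall_le_add_chi_sub_chi (hM : MConvexFn f) {x : Fin n → ℤ} (hx : f x ≠ ⊤)
    (hloc : ∀ i j, f x ≤ f (x + chi i - chi j)) (y : Fin n → ℤ) : f x ≤ f y := by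
  induction hfx : f x using EReal.rec with
  | bot => exact bot_le
  | top => exact absurd hfx hx
  | coe a =>
    rw [← hfx]
    induction hd : ∑ k, (x k - y k).natAbs using Nat.strong_induction_on generalizing y with
    | _ d ih =>
      by_cases hy : f y = ⊤
      · exact hy ▸ le_top
      by_cases hxy : x = y
      · exact hxy ▸ le_rfl
      obtain ⟨y', hy'd, hy'⟩ := hM.exists_closer_le hfx hloc hy hxy
      exact (ih _ (hd ▸ hy'd) y' rfl).trans hy'

end MConvexFn

theorem statement0_general {n : ℕ} (f : (Fin n → ℤ) → EReal)
    (hM : MConvexFn f)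
    (x : Fin n → ℤ) (hx : f x ≠ ⊤) :
    (∀ y : Fin n → ℤ, f x ≤ f y) ↔
      (∀ i j : Fin n, f x ≤ f (x + chi i - chi j)) :=
  ⟨fun h _ _ => h _, hM.le_of_forall_le_add_chi_sub_chi hx⟩

/-- A point `x* ∈ dom f` of an M-convex function `f` is a global minimizer of `f`
iff `f(x* + χ_i - χ_j) ≥ f(x*)` for all `i, j ∈ N`. -/
theorem statement0 {n : ℕ} (hn : 1 ≤ n) (f : (Fin n → ℤ) → EReal)
    (hbot : NoBot f) (hM : MConvexFn f)
    (x : Fin n → ℤ) (hx : f x ≠ ⊤) :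
    (∀ y : Fin n → ℤ, f x ≤ f y) ↔
      (∀ i j : Fin n, f x ≤ f (x + chi i - chi j)) :=
  statement0_general f hM x hx
end
end

section
/- Let f : ℤ^n → ℝ ∪ {+∞} be an M-convex function, y ∈ dom f with φ(y) < 0, and let i, j ∈ N be distinct with f'(y; i, j) = φ(y). Then φ(y + χ_i − χ_j) ≥ φ(y); moreover, for every pair of distinct h, k ∈ N it holds that f'(y + χ_i − χ_j; h, k) ≥ φ(y), and if this inequality holds with equality then f'(y + χ_i − χ_j; h, k) = φ(y + χ_i − χ_j), i.e., +χ_h − χ_k is a steepest descent direction at y + χ_i − χ_j. -/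
/-!
Let `p = φ(y) = f(y') - f(y)` with `y' = y + χ_i - χ_j`, so every neighbour `y + χ_a - χ_b`
of `y` (including `y` itself) has value at least `f(y')`. For a neighbour `x = y' + χ_h - χ_k`
of `y'`, one exchange step between `x` and `y` at the coordinate `i` produces two points that
are again neighbours of `y`, so `f(x) + f(y) ≥ 2 f(y')`, i.e. `f'(y'; h, k) ≥ f(y') - f(y) = p`.
Thus every slope at `y'` is at least `φ(y)`, which gives all three claims.
-/

noncomputable section

open scoped BigOperators

variable {n : ℕ}

lemma phi_le_slopeZ (f : (Fin n → ℤ) → EReal) (x : Fin n → ℤ) (a b : Fin n) :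
    phi f x ≤ slopeZ f x a b :=
  iInf_le_of_le a (iInf_le _ b)

lemma phi_le_zero (f : (Fin n → ℤ) → EReal) (x : Fin n → ℤ) (a : Fin n) : phi f x ≤ 0 := by
  refine (phi_le_slopeZ f x a a).trans ?_
  simpa only [slopeZ, add_sub_cancel_right] using EReal.sub_self_le_zero

lemma MConvexFn.add_le_add_of_forall_le_neighbor {f : (Fin n → ℤ) → EReal} (hM : MConvexFn f)
    {y : Fin n → ℤ} (hyb : f y ≠ ⊥) (hy : f y ≠ ⊤) {c : EReal}
    (hc : ∀ a b, c ≤ f (y + chi a - chi b))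
    (i j h k : Fin n) : c + c ≤ f (y + chi i - chi j + chi h - chi k) + f y := by
  have hcy : c ≤ f y := by simpa only [add_sub_cancel_right] using hc i i
  by_cases hij : i = j
  · subst hij
    simpa only [add_sub_cancel_right] using add_le_add (hc h k) hcy
  by_cases hik : i = k
  · subst hik
    have hx : y + chi i - chi j + chi h - chi i = y + chi h - chi j := by abel
    simpa only [hx] using add_le_add (hc h j) hcy
  set x := y + chi i - chi j + chi h - chi k with hxdef
  by_cases hx : f x = ⊤
  · rw [hx, EReal.top_add_of_ne_bot hyb]
    exact le_top
  have hxi : y i < x i := by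
    simp only [hxdef, Pi.add_apply, Pi.sub_apply, chi]
    split_ifs <;> omega
  obtain ⟨l, hl, hexc⟩ := hM.2 x y hx hy i hxi
  have hlx : c ≤ f (x - chi i + chi l) := by
    have hl' : l = j ∨ l = k := by
      simp only [hxdef, Pi.add_apply, Pi.sub_apply, chi] at hl
      by_contra! hne
      split_ifs at hl <;> omega
    rcases hl' with rfl | rfl
    · have he : x - chi i + chi l = y + chi h - chi k := by rw [hxdef]; abel
      simpa only [he] using hc h k
    · have he : x - chi i + chi l = y + chi h - chi j := by rw [hxdef]; abel
      simpa only [he] using hc h j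
  exact (add_le_add hlx (hc i l)).trans hexc

theorem phi_le_slopeZ_of_steepest {f : (Fin n → ℤ) → EReal} (hbot : NoBot f) (hM : MConvexFn f)
    {y : Fin n → ℤ} (hy : f y ≠ ⊤) {i j : Fin n} (hd : slopeZ f y i j = phi f y) (h k : Fin n) :
    phi f y ≤ slopeZ f (y + chi i - chi j) h k := by
  set y' := y + chi i - chi j
  set r := (f y).toReal
  have hr : f y = r := (EReal.coe_toReal hy (hbot y)).symm
  have hy' : f y' ≠ ⊤ := by
    intro htop
    have := phi_le_zero f y i
    rw [← hd, slopeZ, htop, hr, EReal.top_sub_coe] at this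
    simp at this
  set s := (f y').toReal
  have hs : f y' = s := (EReal.coe_toReal hy' (hbot y')).symm
  have hphi : phi f y = ((s - r : ℝ) : EReal) := by rw [← hd, slopeZ, hr, hs, EReal.coe_sub]
  have hnbhd : ∀ a b, (s : EReal) ≤ f (y + chi a - chi b) := fun a b => by
    have hab := phi_le_slopeZ f y a b
    rw [hphi, slopeZ, hr, EReal.le_sub_iff_add_le (.inl (EReal.coe_ne_bot r))
      (.inl (EReal.coe_ne_top r))] at hab
    rwa [← EReal.coe_add, sub_add_cancel] at hab
  have htwo := hM.add_le_add_of_forall_le_neighbor (hbot y) hy hnbhd i j h k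
  rw [hr, ← EReal.sub_le_iff_le_add (.inl (EReal.coe_ne_bot r))
    (.inl (EReal.coe_ne_top r))] at htwo
  rw [hphi, slopeZ, hs, EReal.le_sub_iff_add_le (.inl (EReal.coe_ne_bot s))
    (.inl (EReal.coe_ne_top s))]
  convert htwo using 1
  norm_cast
  ring

theorem statement1_general {n : ℕ} (f : (Fin n → ℤ) → EReal)
    (hbot : NoBot f) (hM : MConvexFn f)
    (y : Fin n → ℤ) (hy : f y ≠ ⊤)
    (i j : Fin n) (hd : slopeZ f y i j = phi f y) :
    phi f y ≤ phi f (y + chi i - chi j) ∧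
    ∀ h k : Fin n, h ≠ k →
      phi f y ≤ slopeZ f (y + chi i - chi j) h k ∧
      (slopeZ f (y + chi i - chi j) h k = phi f y →
        slopeZ f (y + chi i - chi j) h k = phi f (y + chi i - chi j)) := by
  have hslope := phi_le_slopeZ_of_steepest hbot hM hy hd
  have hphi : phi f y ≤ phi f (y + chi i - chi j) := le_iInf₂ hslope
  exact ⟨hphi, fun h k _ =>
    ⟨hslope h k, fun heq => le_antisymm (heq ▸ hphi) (phi_le_slopeZ f _ h k)⟩⟩

/-- Monotonicity of the steepest descent slopeZ: if `+χ_i - χ_j` is a steepest descent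
direction at `y` with `φ(y) < 0`, then `φ(y + χ_i - χ_j) ≥ φ(y)`; moreover every slopeZ
at `y + χ_i - χ_j` is at least `φ(y)`, and a direction whose slopeZ at `y + χ_i - χ_j`
equals `φ(y)` is a steepest descent direction at `y + χ_i - χ_j`. -/
theorem statement1 {n : ℕ} (hn : 1 ≤ n) (f : (Fin n → ℤ) → EReal)
    (hbot : NoBot f) (hM : MConvexFn f)
    (y : Fin n → ℤ) (hy : f y ≠ ⊤) (hphi : phi f y < 0)
    (i j : Fin n) (hij : i ≠ j) (hd : slopeZ f y i j = phi f y) :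
    phi f y ≤ phi f (y + chi i - chi j) ∧
    ∀ h k : Fin n, h ≠ k →
      phi f y ≤ slopeZ f (y + chi i - chi j) h k ∧
      (slopeZ f (y + chi i - chi j) h k = phi f y →
        slopeZ f (y + chi i - chi j) h k = phi f (y + chi i - chi j)) :=
  statement1_general f hbot hM y hy i j hd
end
end

section
/- Let f : ℤ^n → ℝ ∪ {+∞} be an M-convex function, c ∈ ℝ, y ∈ dom f, and let i, j ∈ N be distinct elements such that f'(y; i, j) > c. Then for every k ∈ N ∖ {i, j} with y + χ_i − χ_k ∈ dom f, it holds that f'(y + χ_i − χ_k; i, j) ≥ f'(y; i, j) > c. -/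
noncomputable section

open scoped BigOperators

theorem EReal.sub_le_sub_of_add_le_add {a b : EReal} {r s : ℝ} (h : a + s ≤ b + r) :
    a - r ≤ b - s := by
  induction a using EReal.rec <;> induction b using EReal.rec <;>
    simp_all [← EReal.coe_add, ← EReal.coe_sub]
  linarith

namespace MConvexFn

variable {n : ℕ} {f : (Fin n → ℤ) → EReal}

/-- Exchanging at `i` between `y + 2χ_i - χ_j - χ_k` and `y` can only return `j` or `k`,
and both choices produce the same pair of points. -/
theorem add_le_add_of_double_shift (hM : MConvexFn f) {y : Fin n → ℤ} (hy : f y ≠ ⊤)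
    {i j k : Fin n} (hki : k ≠ i) (hx : f (y + chi i - chi k + chi i - chi j) ≠ ⊤) :
    f (y + chi i - chi j) + f (y + chi i - chi k) ≤
      f (y + chi i - chi k + chi i - chi j) + f y := by
  set x := y + chi i - chi k + chi i - chi j
  have hxi : y i < x i := by
    simp only [x, chi, Pi.add_apply, Pi.sub_apply, hki.symm, if_true, if_false]
    split_ifs <;> omega
  obtain ⟨m, hm, hexc⟩ := hM.2 x y hx hy i hxi
  have hm : m = j ∨ m = k := by
    by_contra! hmjk
    simp only [x, chi, Pi.add_apply, Pi.sub_apply, hmjk.1, hmjk.2, if_false] at hm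
    split_ifs at hm <;> omega
  rcases hm with rfl | rfl
  · have hx' : x - chi i + chi m = y + chi i - chi k := by
      funext t
      simp only [x, chi, Pi.add_apply, Pi.sub_apply]
      split_ifs <;> ring
    rwa [hx', add_comm] at hexc
  · have hx' : x - chi i + chi m = y + chi i - chi j := by
      funext t
      simp only [x, chi, Pi.add_apply, Pi.sub_apply]
      split_ifs <;> ring
    rwa [hx'] at hexc

theorem slopeZ_le_slopeZ_add_sub (hM : MConvexFn f) (hbot : NoBot f) {y : Fin n → ℤ}
    (hy : f y ≠ ⊤) {i j k : Fin n} (hki : k ≠ i) (hdom : f (y + chi i - chi k) ≠ ⊤) :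
    slopeZ f y i j ≤ slopeZ f (y + chi i - chi k) i j := by
  unfold slopeZ
  by_cases hx : f (y + chi i - chi k + chi i - chi j) = ⊤
  · rw [hx, EReal.top_sub hdom]
    exact le_top
  have hexc := hM.add_le_add_of_double_shift hy hki hx
  lift f y to ℝ using ⟨hy, hbot y⟩ with r
  lift f (y + chi i - chi k) to ℝ using ⟨hdom, hbot _⟩ with s
  exact EReal.sub_le_sub_of_add_le_add hexc

end MConvexFn

theorem statement2_general {n : ℕ} (f : (Fin n → ℤ) → EReal)
    (hbot : NoBot f) (hM : MConvexFn f) (c : ℝ)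
    (y : Fin n → ℤ) (hy : f y ≠ ⊤)
    (i j : Fin n) (hd : (c : EReal) < slopeZ f y i j)
    (k : Fin n) (hki : k ≠ i)
    (hdom : f (y + chi i - chi k) ≠ ⊤) :
    slopeZ f y i j ≤ slopeZ f (y + chi i - chi k) i j ∧
      (c : EReal) < slopeZ f (y + chi i - chi k) i j := by
  have hmono := hM.slopeZ_le_slopeZ_add_sub hbot hy hki hdom (j := j)
  exact ⟨hmono, hd.trans_le hmono⟩

/-- If `f'(y; i, j) > c` and `y + χ_i - χ_k ∈ dom f` for some `k ∉ {i, j}`, then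
`f'(y + χ_i - χ_k; i, j) ≥ f'(y; i, j) > c`. -/
theorem statement2 {n : ℕ} (hn : 1 ≤ n) (f : (Fin n → ℤ) → EReal)
    (hbot : NoBot f) (hM : MConvexFn f) (c : ℝ)
    (y : Fin n → ℤ) (hy : f y ≠ ⊤)
    (i j : Fin n) (hij : i ≠ j) (hd : (c : EReal) < slopeZ f y i j)
    (k : Fin n) (hki : k ≠ i) (hkj : k ≠ j)
    (hdom : f (y + chi i - chi k) ≠ ⊤) :
    slopeZ f y i j ≤ slopeZ f (y + chi i - chi k) i j ∧
      (c : EReal) < slopeZ f (y + chi i - chi k) i j :=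
  statement2_general f hbot hM c y hy i j hd k hki hdom
end
end

section
/- Let f : ℤ^n → ℝ ∪ {+∞} be an M-convex function with bounded dom f, let R ⊆ N with ∅ ≠ R ⊊ N, and let k be an integer with k̲ ≤ k < k̄. Let x ∈ M(k), and suppose i ∈ R and j ∈ N ∖ R minimize the value f'(x; i, j) over all pairs in R × (N ∖ R). Then x + χ_i − χ_j ∈ M(k+1). -/
/-!
Take `y ∈ dom f` with `y(R) = k + 1` and pick `a ∈ R` with `x(a) < y(a)`; the exchange axiom
for `y, x` at `a` yields `b` with `f(y') + f(x') ≤ f(y) + f(x)`, where `y' = y - χ_a + χ_b` and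
`x' = x + χ_a - χ_b`. If `b ∈ R`, then `x'` lies on level `k`, so `f(x) ≤ f(x')` and hence
`f(y') ≤ f(y)`, while `y'` lies on level `k + 1` and is closer to `x`: induct on the `ℓ₁`-distance.
If `b ∉ R`, then `y'` lies on level `k`, so `f(x') ≤ f(y)`, and `f(x + χ_i - χ_j) ≤ f(x')` is the
minimality of the slope. The same exchange, walking from a point above level `k` towards `x`,
lowers the level by at most one per step, so level `k + 1` meets `dom f`.
-/

noncomputable section

open scoped BigOperators

/-- Bounded effective domain. -/
def BddDom {n : ℕ} (f : (Fin n → ℤ) → EReal) : Prop :=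
  ∃ C : ℤ, ∀ x : Fin n → ℤ, f x ≠ ⊤ → ∀ i, |x i| ≤ C

/-- `x(R) = Σ_{i ∈ R} x(i)`. -/
def sumR {n : ℕ} (R : Finset (Fin n)) (x : Fin n → ℤ) : ℤ := ∑ i ∈ R, x i

/-- `k̲ = min { x(R) : x ∈ dom f }`. -/
def kmin {n : ℕ} (f : (Fin n → ℤ) → EReal) (R : Finset (Fin n)) : ℤ :=
  sInf {r : ℤ | ∃ x, f x ≠ ⊤ ∧ sumR R x = r}

/-- `k̄ = max { x(R) : x ∈ dom f }`. -/
def kmax {n : ℕ} (f : (Fin n → ℤ) → EReal) (R : Finset (Fin n)) : ℤ :=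
  sSup {r : ℤ | ∃ x, f x ≠ ⊤ ∧ sumR R x = r}

/-- `M(k)`: the set of minimizers of `f` over `{x ∈ dom f : x(R) = k}`. -/
def Mset {n : ℕ} (f : (Fin n → ℤ) → EReal) (R : Finset (Fin n)) (k : ℤ) :
    Set (Fin n → ℤ) :=
  {x | f x ≠ ⊤ ∧ sumR R x = k ∧ ∀ y : Fin n → ℤ, f y ≠ ⊤ → sumR R y = k → f x ≤ f y}

/-- `z(k) = min { f(x) : x ∈ dom f, x(R) = k }`. -/
def zval {n : ℕ} (f : (Fin n → ℤ) → EReal) (R : Finset (Fin n)) (k : ℤ) : EReal :=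
  ⨅ (x : Fin n → ℤ) (_ : f x ≠ ⊤ ∧ sumR R x = k), f x

/-- `φ^R(x) = min { f'(x; i, j) : i ∈ R, j ∈ N ∖ R }`. -/
def phiR {n : ℕ} (f : (Fin n → ℤ) → EReal) (R : Finset (Fin n)) (x : Fin n → ℤ) : EReal :=
  ⨅ i ∈ R, ⨅ j ∈ Rᶜ, slopeZ f x i j

open Finset

lemma EReal.le_of_add_le_add_of_le {a b c d : EReal} (h : a + b ≤ c + d) (hdb : d ≤ b)
    (hd : d ≠ ⊥) (hd' : d ≠ ⊤) : a ≤ c := by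
  lift d to ℝ using ⟨hd', hd⟩
  exact (EReal.addLECancellable_coe d).add_le_add_iff_right.1 ((add_le_add le_rfl hdb).trans h)

lemma EReal.le_of_sub_le_sub_right {a b c : EReal} (h : a - c ≤ b - c) (hc : c ≠ ⊥)
    (hc' : c ≠ ⊤) : a ≤ b := by
  lift c to ℝ using ⟨hc', hc⟩
  simpa only [EReal.sub_add_cancel] using add_le_add h (le_refl (c : EReal))

section

variable {n : ℕ}

lemma sum_chi (R : Finset (Fin n)) (a : Fin n) :
    ∑ m ∈ R, chi a m = if a ∈ R then 1 else 0 :=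
  sum_ite_eq' R a (fun _ => (1 : ℤ))

lemma sumR_add_chi_sub_chi (R : Finset (Fin n)) (y : Fin n → ℤ) (a b : Fin n) :
    sumR R (y + chi a - chi b)
      = sumR R y + (if a ∈ R then 1 else 0) - (if b ∈ R then 1 else 0) := by
  simp only [sumR, Pi.sub_apply, Pi.add_apply, sum_sub_distrib, sum_add_distrib, sum_chi]

lemma sumR_sub_chi_add_chi (R : Finset (Fin n)) (y : Fin n → ℤ) (a b : Fin n) :
    sumR R (y - chi a + chi b)
      = sumR R y - (if a ∈ R then 1 else 0) + (if b ∈ R then 1 else 0) := by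
  simp only [sumR, Pi.sub_apply, Pi.add_apply, sum_sub_distrib, sum_add_distrib, sum_chi]

def l1Dist (x y : Fin n → ℤ) : ℕ := ∑ m, (x m - y m).natAbs

lemma l1Dist_sub_chi_add_chi_lt {x y : Fin n → ℤ} {a b : Fin n} (ha : y a < x a)
    (hb : x b < y b) : l1Dist (x - chi a + chi b) y < l1Dist x y := by
  have hab : a ≠ b := by rintro rfl; omega
  refine sum_lt_sum (fun m _ => ?_) ⟨a, mem_univ a, ?_⟩
  · rcases eq_or_ne m a with rfl | hma
    · simp only [Pi.add_apply, Pi.sub_apply, chi, if_neg hab]; omega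
    rcases eq_or_ne m b with rfl | hmb
    · simp only [Pi.add_apply, Pi.sub_apply, chi, if_neg hma]; omega
    · simp only [Pi.add_apply, Pi.sub_apply, chi, if_neg hma, if_neg hmb]; omega
  · simp only [Pi.add_apply, Pi.sub_apply, chi, if_neg hab, if_true]
    omega

lemma exists_lt_sumR_of_lt_kmax {f : (Fin n → ℤ) → EReal} {R : Finset (Fin n)} {k : ℤ}
    (hdom : ∃ x, f x ≠ ⊤) (hk : k < kmax f R) : ∃ z, f z ≠ ⊤ ∧ k < sumR R z := by
  by_contra! h
  obtain ⟨x, hx⟩ := hdom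
  exact hk.not_ge (csSup_le ⟨_, x, hx, rfl⟩ (by rintro _ ⟨z, hz, rfl⟩; exact h z hz))

variable {f : (Fin n → ℤ) → EReal}

lemma MConvexFn.exchange_ne_top (hM : MConvexFn f) (hbot : NoBot f) {x y : Fin n → ℤ}
    (hx : f x ≠ ⊤) (hy : f y ≠ ⊤) {i : Fin n} (hi : y i < x i) :
    ∃ j, x j < y j ∧ f (x - chi i + chi j) ≠ ⊤ ∧ f (y + chi i - chi j) ≠ ⊤ ∧
      f (x - chi i + chi j) + f (y + chi i - chi j) ≤ f x + f y := by
  obtain ⟨j, hj, hexc⟩ := hM.2 x y hx hy i hi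
  have hsum : f x + f y ≠ ⊤ := (EReal.add_lt_top hx hy).ne
  refine ⟨j, hj, fun h => hsum ?_, fun h => hsum ?_, hexc⟩
  · rwa [h, EReal.top_add_of_ne_bot (hbot _), top_le_iff] at hexc
  · rwa [h, EReal.add_top_of_ne_bot (hbot _), top_le_iff] at hexc

lemma exists_sumR_eq_of_lt_of_le (hM : MConvexFn f) (hbot : NoBot f) {R : Finset (Fin n)}
    {x z : Fin n → ℤ} (hx : f x ≠ ⊤) (hz : f z ≠ ⊤) {m : ℤ} (hxm : sumR R x < m)
    (hmz : m ≤ sumR R z) : ∃ y, f y ≠ ⊤ ∧ sumR R y = m := by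
  induction hd : l1Dist z x using Nat.strong_induction_on generalizing z with
  | _ d ih =>
  rcases hmz.eq_or_lt with h | h
  · exact ⟨z, hz, h.symm⟩
  obtain ⟨a, haR, ha⟩ := exists_lt_of_sum_lt (hxm.trans h)
  obtain ⟨b, hb, hz', -, -⟩ := hM.exchange_ne_top hbot hz hx ha
  refine ih _ (hd ▸ l1Dist_sub_chi_add_chi_lt ha hb) hz' ?_ rfl
  rw [sumR_sub_chi_add_chi, if_pos haR]
  split_ifs <;> omega

lemma le_of_mem_Mset_of_slopeZ_minimal (hM : MConvexFn f) (hbot : NoBot f)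
    {R : Finset (Fin n)} {k : ℤ} {x : Fin n → ℤ} (hx : x ∈ Mset f R k) {i j : Fin n}
    (hminimal : ∀ i' ∈ R, ∀ j' ∉ R, slopeZ f x i j ≤ slopeZ f x i' j')
    {y : Fin n → ℤ} (hy : f y ≠ ⊤) (hyk : sumR R y = k + 1) :
    f (x + chi i - chi j) ≤ f y := by
  obtain ⟨hxt, hxk, hxmin⟩ := hx
  induction hd : l1Dist y x using Nat.strong_induction_on generalizing y with
  | _ d ih =>
  obtain ⟨a, haR, ha⟩ : ∃ a ∈ R, x a < y a := exists_lt_of_sum_lt (by unfold sumR at *; omega)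
  obtain ⟨b, hb, hy', hx', hexc⟩ := hM.exchange_ne_top hbot hy hxt ha
  by_cases hbR : b ∈ R
  · have hxx' : f x ≤ f (x + chi a - chi b) := hxmin _ hx' <| by
      rw [sumR_add_chi_sub_chi, if_pos haR, if_pos hbR]; omega
    have hy'y : f (y - chi a + chi b) ≤ f y :=
      EReal.le_of_add_le_add_of_le hexc hxx' (hbot x) hxt
    refine (ih _ (hd ▸ l1Dist_sub_chi_add_chi_lt ha hb) hy' ?_ rfl).trans hy'y
    rw [sumR_sub_chi_add_chi, if_pos haR, if_pos hbR]; omega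
  · have hxy' : f x ≤ f (y - chi a + chi b) := hxmin _ hy' <| by
      rw [sumR_sub_chi_add_chi, if_pos haR, if_neg hbR]; omega
    have hx'y : f (x + chi a - chi b) ≤ f y :=
      EReal.le_of_add_le_add_of_le ((add_comm _ _).trans_le hexc) hxy' (hbot x) hxt
    exact (EReal.le_of_sub_le_sub_right (hminimal a haR b hbR) (hbot x) hxt).trans hx'y

end

theorem statement5_general {n : ℕ} (f : (Fin n → ℤ) → EReal)
    (hbot : NoBot f) (hM : MConvexFn f)
    (R : Finset (Fin n))
    (k : ℤ) (hk2 : k < kmax f R)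
    (x : Fin n → ℤ) (hx : x ∈ Mset f R k)
    (i j : Fin n) (hi : i ∈ R) (hj : j ∉ R)
    (hminimal : ∀ i' ∈ R, ∀ j' ∉ R, slopeZ f x i j ≤ slopeZ f x i' j') :
    x + chi i - chi j ∈ Mset f R (k + 1) := by
  have hle : ∀ y, f y ≠ ⊤ → sumR R y = k + 1 → f (x + chi i - chi j) ≤ f y :=
    fun _ hy hyk => le_of_mem_Mset_of_slopeZ_minimal hM hbot hx hminimal hy hyk
  obtain ⟨z, hz, hkz⟩ := exists_lt_sumR_of_lt_kmax hM.1 hk2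
  obtain ⟨y, hy, hyk⟩ :=
    exists_sumR_eq_of_lt_of_le hM hbot hx.1 hz (by rw [hx.2.1]; omega) (Int.add_one_le_iff.2 hkz)
  refine ⟨ne_top_of_le_ne_top hy (hle y hy hyk), ?_, hle⟩
  rw [sumR_add_chi_sub_chi, if_pos hi, if_neg hj, hx.2.1]
  ring

/-- If `x ∈ M(k)` and `(i, j) ∈ R × (N ∖ R)` minimizes `f'(x; i, j)`, then
`x + χ_i - χ_j ∈ M(k+1)`. -/
theorem statement5 {n : ℕ} (hn : 1 ≤ n) (f : (Fin n → ℤ) → EReal)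
    (hbot : NoBot f) (hM : MConvexFn f) (hbdd : BddDom f)
    (R : Finset (Fin n)) (hR : R.Nonempty) (hRp : R ≠ Finset.univ)
    (k : ℤ) (hk1 : kmin f R ≤ k) (hk2 : k < kmax f R)
    (x : Fin n → ℤ) (hx : x ∈ Mset f R k)
    (i j : Fin n) (hi : i ∈ R) (hj : j ∉ R)
    (hminimal : ∀ i' ∈ R, ∀ j' ∉ R, slopeZ f x i j ≤ slopeZ f x i' j') :
    x + chi i - chi j ∈ Mset f R (k + 1) :=
  statement5_general f hbot hM R k hk2 x hx i j hi hj hminimal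
end
end

section
/- Let f : ℤ^n → ℝ ∪ {+∞} be an M-convex function with bounded dom f, let R ⊆ N with ∅ ≠ R ⊊ N, and let k be an integer with k̲ ≤ k ≤ k̄ − 2. Let x ∈ M(k), and let i ∈ R and j ∈ N ∖ R minimize f'(x; i, j) over R × (N ∖ R). If f'(x + χ_i − χ_j; i, j) = f'(x; i, j), then f'(x + χ_i − χ_j; i, j) ≤ f'(x + χ_i − χ_j; h, ℓ) for all h ∈ R and ℓ ∈ N ∖ R, and x + 2χ_i − 2χ_j ∈ M(k+2). -/
/-!
Exchanging between a minimizer `x` on level `k` and a point `y` on a higher level, and walking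
`y` towards `x` inside its level whenever the exchange stays there, produces a step
`x + χ_{i'} - χ_{j'}` (`i' ∈ R`, `j' ∉ R`) together with a point one level below `y` whose values
add up to at most `f x + f y`. For `y` on level `k + 1` this makes `x + χ_i - χ_j`, the cheapest
such step, a minimizer on level `k + 1` (which is nonempty because the domain is bounded and
reaches level `k + 2`). For `y` on level `k + 2` both points lie on level `k + 1`, so
`f x + f y ≥ 2 f (x + χ_i - χ_j) = f x + f (x + 2χ_i - 2χ_j)` by the equal-slope hypothesis.
-/

noncomputable section

open scoped BigOperators

section sumR

variable {n : ℕ} (R : Finset (Fin n))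

@[simp]
lemma sumR_add (y z : Fin n → ℤ) : sumR R (y + z) = sumR R y + sumR R z :=
  Finset.sum_add_distrib

@[simp]
lemma sumR_sub (y z : Fin n → ℤ) : sumR R (y - z) = sumR R y - sumR R z :=
  Finset.sum_sub_distrib ..

@[simp]
lemma sumR_chi (t : Fin n) : sumR R (chi t) = if t ∈ R then 1 else 0 :=
  Finset.sum_ite_eq' R t fun _ => (1 : ℤ)

variable {R} in
lemma sumR_add_chi_sub_chi_s7 {i j : Fin n} (hi : i ∈ R) (hj : j ∉ R) (y : Fin n → ℤ) :
    sumR R (y + chi i - chi j) = sumR R y + 1 := by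
  simp [hi, hj]

end sumR

lemma EReal.le_of_add_le_add_right {a b c : EReal} (hc : c ≠ ⊤) (hc' : c ≠ ⊥)
    (h : a + c ≤ b + c) : a ≤ b := by
  lift c to ℝ using ⟨hc, hc'⟩
  exact (EReal.addLECancellable_coe c).add_le_add_iff_right.1 h

lemma sum_toNat_sub_exchange_lt {n : ℕ} {x y : Fin n → ℤ} {i j : Fin n}
    (hi : x i < y i) (hj : y j < x j) :
    ∑ r, ((y - chi i + chi j) r - x r).toNat < ∑ r, (y r - x r).toNat := by
  have hij : i ≠ j := by rintro rfl; omega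
  apply Finset.sum_lt_sum
  · intro r _
    simp only [Pi.add_apply, Pi.sub_apply, chi]
    split_ifs <;> subst_vars <;> omega
  · exact ⟨i, Finset.mem_univ i, by simp [chi, hij]; omega⟩

section MConvex

variable {n : ℕ} {f : (Fin n → ℤ) → EReal} {R : Finset (Fin n)} {k : ℤ} {x y : Fin n → ℤ}

lemma NoBot.ne_top_of_add_le (hbot : NoBot f) {a b c d : Fin n → ℤ}
    (h : f a + f b ≤ f c + f d) (hc : f c ≠ ⊤) (hd : f d ≠ ⊤) : f a ≠ ⊤ ∧ f b ≠ ⊤ :=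
  (EReal.add_ne_top_iff_ne_top₂ (hbot a) (hbot b)).1
    (ne_top_of_le_ne_top (EReal.add_ne_top hc hd) h)

theorem exists_exchange_of_mem_Mset (hbot : NoBot f) (hM : MConvexFn f)
    (hx : x ∈ Mset f R k) (hy : f y ≠ ⊤) (hk : k < sumR R y) :
    ∃ i ∈ R, ∃ j ∉ R, ∃ y', sumR R y' = sumR R y - 1 ∧
      f (x + chi i - chi j) + f y' ≤ f x + f y := by
  obtain ⟨hfx, hxk, hxmin⟩ := hx
  induction hd : ∑ r, (y r - x r).toNat using Nat.strong_induction_on generalizing y with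
  | _ d ih =>
    obtain ⟨i, hiR, hxi⟩ := Finset.exists_lt_of_sum_lt (s := R) (f := x) (g := y)
      (by unfold sumR at hxk hk; omega)
    obtain ⟨j, hyj, hexch⟩ := hM.2 y x hy hfx i hxi
    obtain ⟨hy't, hx't⟩ := hbot.ne_top_of_add_le hexch hy hfx
    by_cases hjR : j ∈ R
    · -- `x + χ_i - χ_j` lies on level `k`, so this exchange does not increase `f y`.
      have hys : sumR R (y - chi i + chi j) = sumR R y := by simp [hiR, hjR]
      have hle : f (y - chi i + chi j) ≤ f y := by
        refine EReal.le_of_add_le_add_right hfx (hbot x) (le_trans ?_ hexch)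
        exact add_le_add le_rfl (hxmin _ hx't (by simp [hiR, hjR, hxk]))
      obtain ⟨i', hi', j', hj', y', hy's, hy'le⟩ :=
        ih _ (hd ▸ sum_toNat_sub_exchange_lt hxi hyj) hy't (hys ▸ hk) rfl
      exact ⟨i', hi', j', hj', y', hy's.trans (by rw [hys]),
        hy'le.trans (add_le_add le_rfl hle)⟩
    · exact ⟨i, hiR, j, hjR, y - chi i + chi j, by simp [hiR, hjR],
        (add_comm _ _).trans_le (hexch.trans_eq (add_comm _ _))⟩

theorem le_of_mem_Mset_of_sumR_eq_succ (hbot : NoBot f) (hM : MConvexFn f)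
    (hx : x ∈ Mset f R k) (hy : f y ≠ ⊤) (hyk : sumR R y = k + 1) :
    ∃ i ∈ R, ∃ j ∉ R, f (x + chi i - chi j) ≤ f y := by
  obtain ⟨i, hi, j, hj, y', hy'k, hle⟩ := exists_exchange_of_mem_Mset hbot hM hx hy (by omega)
  have hy' : f y' ≠ ⊤ := (hbot.ne_top_of_add_le hle hx.1 hy).2
  refine ⟨i, hi, j, hj, EReal.le_of_add_le_add_right hy' (hbot y') ?_⟩
  calc f (x + chi i - chi j) + f y' ≤ f x + f y := hle
    _ ≤ f y' + f y := add_le_add (hx.2.2 y' hy' (by omega)) le_rfl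
    _ = f y + f y' := add_comm _ _

theorem exists_sumR_eq_succ_of_mem_Mset (hbot : NoBot f) (hM : MConvexFn f)
    (hx : x ∈ Mset f R k) (hy : f y ≠ ⊤) (hk : k < sumR R y) :
    ∃ z, f z ≠ ⊤ ∧ sumR R z = k + 1 := by
  obtain ⟨i, hi, j, hj, y', -, hle⟩ := exists_exchange_of_mem_Mset hbot hM hx hy hk
  exact ⟨_, (hbot.ne_top_of_add_le hle hx.1 hy).1, by rw [sumR_add_chi_sub_chi_s7 hi hj, hx.2.1]⟩

theorem BddDom.exists_sumR_eq_kmax (hbdd : BddDom f) (hx : f x ≠ ⊤) :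
    ∃ v, f v ≠ ⊤ ∧ sumR R v = kmax f R := by
  obtain ⟨C, hC⟩ := hbdd
  refine Int.csSup_mem (s := {r | ∃ v, f v ≠ ⊤ ∧ sumR R v = r}) ⟨_, x, hx, rfl⟩
    ⟨R.card * C, ?_⟩
  rintro _ ⟨v, hv, rfl⟩
  calc sumR R v ≤ ∑ _ ∈ R, C := Finset.sum_le_sum fun r _ => (abs_le.1 (hC v hv r)).2
    _ = R.card * C := by rw [Finset.sum_const, nsmul_eq_mul]

lemma slopeZ_le_slopeZ_iff (hbot : NoBot f) (hx : f x ≠ ⊤) {i j h l : Fin n} :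
    slopeZ f x i j ≤ slopeZ f x h l ↔ f (x + chi i - chi j) ≤ f (x + chi h - chi l) := by
  obtain ⟨a, ha⟩ : ∃ a : ℝ, f x = a := ⟨_, (EReal.coe_toReal hx (hbot x)).symm⟩
  unfold slopeZ
  rw [ha]
  refine ⟨fun hle => ?_, fun hle => EReal.sub_le_sub hle le_rfl⟩
  simpa only [EReal.sub_add_cancel] using add_le_add hle (le_refl (a : EReal))

theorem add_chi_sub_chi_mem_Mset (hbot : NoBot f) (hM : MConvexFn f) (hx : x ∈ Mset f R k)
    {i j : Fin n} (hi : i ∈ R) (hj : j ∉ R)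
    (hminimal : ∀ i' ∈ R, ∀ j' ∉ R, slopeZ f x i j ≤ slopeZ f x i' j')
    (hy : f y ≠ ⊤) (hyk : sumR R y = k + 1) :
    x + chi i - chi j ∈ Mset f R (k + 1) := by
  have hle : ∀ z, f z ≠ ⊤ → sumR R z = k + 1 → f (x + chi i - chi j) ≤ f z := by
    intro z hz hzk
    obtain ⟨i', hi', j', hj', hle⟩ := le_of_mem_Mset_of_sumR_eq_succ hbot hM hx hz hzk
    exact ((slopeZ_le_slopeZ_iff hbot hx.1).1 (hminimal i' hi' j' hj')).trans hle
  exact ⟨ne_top_of_le_ne_top hy (hle y hy hyk), by rw [sumR_add_chi_sub_chi_s7 hi hj, hx.2.1], hle⟩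

theorem add_chi_sub_chi_add_chi_sub_chi_mem_Mset (hbot : NoBot f) (hM : MConvexFn f)
    (hx : x ∈ Mset f R k) {i j : Fin n} (hi : i ∈ R) (hj : j ∉ R)
    (hx₁ : x + chi i - chi j ∈ Mset f R (k + 1))
    (hsame : slopeZ f (x + chi i - chi j) i j = slopeZ f x i j) :
    x + chi i - chi j + chi i - chi j ∈ Mset f R (k + 2) := by
  set x₁ := x + chi i - chi j
  obtain ⟨a, ha⟩ : ∃ a : ℝ, f x = a := ⟨_, (EReal.coe_toReal hx.1 (hbot x)).symm⟩
  obtain ⟨b, hb⟩ : ∃ b : ℝ, f x₁ = b := ⟨_, (EReal.coe_toReal hx₁.1 (hbot x₁)).symm⟩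
  have hx₂ : f (x₁ + chi i - chi j) = ((b - a + b : ℝ) : EReal) := by
    unfold slopeZ at hsame
    rw [ha, hb] at hsame
    rw [← EReal.sub_add_cancel (a := f _) (b := b), hsame]
    norm_cast
  refine ⟨hx₂ ▸ EReal.coe_ne_top _, by rw [sumR_add_chi_sub_chi_s7 hi hj, hx₁.2.1]; ring,
    fun y hy hyk => ?_⟩
  obtain ⟨i', hi', j', hj', y', hy'k, hle⟩ := exists_exchange_of_mem_Mset hbot hM hx hy (by omega)
  obtain ⟨hp, hq⟩ := hbot.ne_top_of_add_le hle hx.1 hy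
  have hbb : (b : EReal) + b ≤ a + f y := by
    rw [← hb, ← ha]
    exact (add_le_add (hx₁.2.2 _ hp (by rw [sumR_add_chi_sub_chi_s7 hi' hj', hx.2.1]))
      (hx₁.2.2 _ hq (by omega))).trans hle
  rw [hx₂]
  calc ((b - a + b : ℝ) : EReal) = (b : EReal) + b - a := by norm_cast; ring
    _ ≤ f y := EReal.sub_le_of_le_add' hbb

lemma slopeZ_le_of_mem_Mset {m : ℤ} {z : Fin n → ℤ} {i j h l : Fin n}
    (hz : z + chi i - chi j ∈ Mset f R m) (hm : sumR R (z + chi h - chi l) = m) :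
    slopeZ f z i j ≤ slopeZ f z h l := by
  refine EReal.sub_le_sub ?_ le_rfl
  by_cases htop : f (z + chi h - chi l) = ⊤
  · exact htop ▸ le_top
  · exact hz.2.2 _ htop hm

end MConvex

theorem statement7_general {n : ℕ} (f : (Fin n → ℤ) → EReal)
    (hbot : NoBot f) (hM : MConvexFn f) (hbdd : BddDom f)
    (R : Finset (Fin n))
    (k : ℤ) (hk2 : k ≤ kmax f R - 2)
    (x : Fin n → ℤ) (hx : x ∈ Mset f R k)
    (i j : Fin n) (hi : i ∈ R) (hj : j ∉ R)
    (hminimal : ∀ i' ∈ R, ∀ j' ∉ R, slopeZ f x i j ≤ slopeZ f x i' j')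
    (hsame : slopeZ f (x + chi i - chi j) i j = slopeZ f x i j) :
    (∀ h ∈ R, ∀ l ∉ R,
        slopeZ f (x + chi i - chi j) i j ≤ slopeZ f (x + chi i - chi j) h l) ∧
      x + (2 : ℤ) • chi i - (2 : ℤ) • chi j ∈ Mset f R (k + 2) := by
  obtain ⟨v, hv, hvk⟩ := hbdd.exists_sumR_eq_kmax (R := R) hx.1
  obtain ⟨y, hy, hyk⟩ := exists_sumR_eq_succ_of_mem_Mset hbot hM hx hv (by omega)
  have hx₁ := add_chi_sub_chi_mem_Mset hbot hM hx hi hj hminimal hy hyk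
  have hx₂ := add_chi_sub_chi_add_chi_sub_chi_mem_Mset hbot hM hx hi hj hx₁ hsame
  refine ⟨fun h hh l hl => slopeZ_le_of_mem_Mset hx₂ ?_, ?_⟩
  · rw [sumR_add_chi_sub_chi_s7 hh hl, hx₁.2.1]
    ring
  · convert hx₂ using 1
    rw [two_smul, two_smul]
    abel

/-- Long-step property: if `x ∈ M(k)`, `(i, j) ∈ R × (N ∖ R)` minimizes `f'(x; ·, ·)`,
and the slopeZ in direction `+χ_i - χ_j` stays the same after one step, then
`+χ_i - χ_j` is still a minimizing direction at `x + χ_i - χ_j` and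
`x + 2χ_i - 2χ_j ∈ M(k+2)`. -/
theorem statement7 {n : ℕ} (hn : 1 ≤ n) (f : (Fin n → ℤ) → EReal)
    (hbot : NoBot f) (hM : MConvexFn f) (hbdd : BddDom f)
    (R : Finset (Fin n)) (hR : R.Nonempty) (hRp : R ≠ Finset.univ)
    (k : ℤ) (hk1 : kmin f R ≤ k) (hk2 : k ≤ kmax f R - 2)
    (x : Fin n → ℤ) (hx : x ∈ Mset f R k)
    (i j : Fin n) (hi : i ∈ R) (hj : j ∉ R)
    (hminimal : ∀ i' ∈ R, ∀ j' ∉ R, slopeZ f x i j ≤ slopeZ f x i' j')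
    (hsame : slopeZ f (x + chi i - chi j) i j = slopeZ f x i j) :
    (∀ h ∈ R, ∀ l ∉ R,
        slopeZ f (x + chi i - chi j) i j ≤ slopeZ f (x + chi i - chi j) h l) ∧
      x + (2 : ℤ) • chi i - (2 : ℤ) • chi j ∈ Mset f R (k + 2) :=
  statement7_general f hbot hM hbdd R k hk2 x hx i j hi hj hminimal hsame
end
end

section
/- Let f : ℤ^n → ℝ ∪ {+∞} be an M-convex function with bounded dom f and R ⊆ N with ∅ ≠ R ⊊ N. Let c ∈ ℝ, let y ∈ dom f, and let i ∈ R be an element satisfying f'(y; i, j) > c for every j ∈ N ∖ R. Also let h ∈ R and k ∈ N ∖ R be elements such that f'(y; h, k) = c = φ^R(y). Then f'(y + χ_h − χ_k; i, j) > c holds for every j ∈ N ∖ R. -/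
noncomputable section

open scoped BigOperators

/-!
Put `y' = y + χ_h - χ_k`, so `f y' = f y + c`, and suppose `f'(y'; i, j) ≤ c` for some
`j ∉ R`. Then `z = y' + χ_i - χ_j` has `f z ≤ f y + 2c`. Exchanging `z` and `y` at `i`
(where `z` exceeds `y`) must move a unit back along `k` or `j`, the only coordinates where
`z` is below `y`. Either way `f z + f y` dominates a sum of two values each at least
`f y + c`, one of them strictly (by `φ^R(y) = c` and the hypothesis on `i`), which is
impossible.
-/

lemma EReal.coe_add_lt_add_of_le_of_lt {p : ℝ} {u v : EReal} (hu : (p : EReal) ≤ u)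
    (hv : (p : EReal) < v) : (p : EReal) + p < u + v := by
  rw [add_comm u]
  exact EReal.add_lt_add_of_lt_of_le' hv hu (ne_bot_of_le_ne_bot (EReal.coe_ne_bot p) hu)
    fun _ hp => absurd hp (EReal.coe_ne_top p)

section

variable {n : ℕ}

lemma chi_apply (i k : Fin n) : chi i k = if k = i then 1 else 0 := rfl

variable {f : (Fin n → ℤ) → EReal}

lemma MConvexFn.exchange_two_step (hM : MConvexFn f) {y : Fin n → ℤ} {h k i j : Fin n}
    (hik : i ≠ k) (hij : i ≠ j) (hy : f y ≠ ⊤)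
    (hz : f (y + chi h - chi k + chi i - chi j) ≠ ⊤) :
    f (y + chi h - chi j) + f (y + chi i - chi k) ≤
        f (y + chi h - chi k + chi i - chi j) + f y ∨
      f (y + chi h - chi k) + f (y + chi i - chi j) ≤
        f (y + chi h - chi k + chi i - chi j) + f y := by
  have hyi : y i < (y + chi h - chi k + chi i - chi j) i := by
    simp only [Pi.add_apply, Pi.sub_apply, chi_apply, if_neg hik, if_neg hij]
    split_ifs <;> omega
  obtain ⟨l, hl, hexc⟩ := hM.2 _ y hz hy i hyi
  have hlkj : l = k ∨ l = j := by
    by_contra! hne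
    simp only [Pi.add_apply, Pi.sub_apply, chi_apply, if_neg hne.1, if_neg hne.2] at hl
    split_ifs at hl <;> omega
  rcases hlkj with rfl | rfl
  · left
    convert hexc using 3
    abel
  · right
    convert hexc using 3
    abel

lemma slopeZ_eq_iff {y : Fin n → ℤ} {a : ℝ} (ha : f y = a) {i j : Fin n} {c : ℝ} :
    slopeZ f y i j = c ↔ f (y + chi i - chi j) = (c + a : ℝ) := by
  rw [slopeZ, ha, EReal.coe_add]
  constructor
  · intro hs
    rw [← hs, EReal.sub_add_cancel]
  · intro hs
    rw [hs, EReal.add_sub_cancel_right]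

lemma lt_slopeZ_iff {y : Fin n → ℤ} {a : ℝ} (ha : f y = a) {i j : Fin n} {c : EReal} :
    c < slopeZ f y i j ↔ c + a < f (y + chi i - chi j) := by
  rw [slopeZ, ha,
    EReal.lt_sub_iff_add_lt (.inl (EReal.coe_ne_bot a)) (.inl (EReal.coe_ne_top a))]

lemma le_slopeZ_iff {y : Fin n → ℤ} {a : ℝ} (ha : f y = a) {i j : Fin n} {c : EReal} :
    c ≤ slopeZ f y i j ↔ c + a ≤ f (y + chi i - chi j) := by
  rw [slopeZ, ha,
    EReal.le_sub_iff_add_le (.inl (EReal.coe_ne_bot a)) (.inl (EReal.coe_ne_top a))]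

lemma slopeZ_le_iff {y : Fin n → ℤ} {a : ℝ} (ha : f y = a) {i j : Fin n} {c : EReal} :
    slopeZ f y i j ≤ c ↔ f (y + chi i - chi j) ≤ c + a := by
  rw [← not_lt, ← not_lt, lt_slopeZ_iff ha]

lemma phiR_le_slopeZ {R : Finset (Fin n)} {y : Fin n → ℤ} {i j : Fin n} (hi : i ∈ R)
    (hj : j ∉ R) : phiR f R y ≤ slopeZ f y i j :=
  (iInf₂_le i hi).trans (iInf₂_le j (Finset.mem_compl.mpr hj))

end

theorem statement8_general {n : ℕ} (f : (Fin n → ℤ) → EReal)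
    (hbot : NoBot f) (hM : MConvexFn f)
    (R : Finset (Fin n))
    (c : ℝ) (y : Fin n → ℤ) (hy : f y ≠ ⊤)
    (i : Fin n) (hiR : i ∈ R)
    (hi : ∀ j : Fin n, j ∉ R → (c : EReal) < slopeZ f y i j)
    (h k : Fin n) (hhR : h ∈ R) (hkR : k ∉ R)
    (hd : slopeZ f y h k = (c : EReal)) (hdphi : phiR f R y = (c : EReal)) :
    ∀ j : Fin n, j ∉ R → (c : EReal) < slopeZ f (y + chi h - chi k) i j := by
  intro j hjR
  by_contra! hcon
  obtain ⟨a, ha⟩ : ∃ a : ℝ, f y = a := ⟨(f y).toReal, (EReal.coe_toReal hy (hbot y)).symm⟩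
  have hy' := (slopeZ_eq_iff ha).1 hd
  have hz := (slopeZ_le_iff hy').1 hcon
  have hzt : f (y + chi h - chi k + chi i - chi j) ≠ ⊤ :=
    ne_top_of_le_ne_top (by exact_mod_cast EReal.coe_ne_top (c + (c + a))) hz
  have hzy : f (y + chi h - chi k + chi i - chi j) + f y ≤
      ((c + a : ℝ) : EReal) + (c + a : ℝ) :=
    calc _ ≤ (c : EReal) + (c + a : ℝ) + a := by rw [ha]; gcongr
      _ = _ := by push_cast; abel
  rcases hM.exchange_two_step (ne_of_mem_of_not_mem hiR hkR) (ne_of_mem_of_not_mem hiR hjR)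
    hy hzt with hsum | hsum
  · have hhj := (le_slopeZ_iff ha).1 (hdphi ▸ phiR_le_slopeZ hhR hjR)
    have hik := (lt_slopeZ_iff ha).1 (hi k hkR)
    exact (EReal.coe_add_lt_add_of_le_of_lt (by exact_mod_cast hhj) hik).not_ge (hsum.trans hzy)
  · have hij := (lt_slopeZ_iff ha).1 (hi j hjR)
    exact (EReal.coe_add_lt_add_of_le_of_lt hy'.ge hij).not_ge (hsum.trans hzy)

/-- If `i ∈ R` satisfies `f'(y; i, j) > c` for every `j ∈ N ∖ R`, and `h ∈ R`,
`k ∈ N ∖ R` satisfy `f'(y; h, k) = c = φ^R(y)`, then `f'(y + χ_h - χ_k; i, j) > c` for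
every `j ∈ N ∖ R`. -/
theorem statement8 {n : ℕ} (hn : 1 ≤ n) (f : (Fin n → ℤ) → EReal)
    (hbot : NoBot f) (hM : MConvexFn f) (hbdd : BddDom f)
    (R : Finset (Fin n)) (hR : R.Nonempty) (hRp : R ≠ Finset.univ)
    (c : ℝ) (y : Fin n → ℤ) (hy : f y ≠ ⊤)
    (i : Fin n) (hiR : i ∈ R)
    (hi : ∀ j : Fin n, j ∉ R → (c : EReal) < slopeZ f y i j)
    (h k : Fin n) (hhR : h ∈ R) (hkR : k ∉ R)
    (hd : slopeZ f y h k = (c : EReal)) (hdphi : phiR f R y = (c : EReal)) :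
    ∀ j : Fin n, j ∉ R → (c : EReal) < slopeZ f (y + chi h - chi k) i j :=
  statement8_general f hbot hM R c y hy i hiR hi h k hhR hkR hd hdphi
end
end

section
/- Let f : ℤ^n → ℝ ∪ {+∞} be a function satisfying the exchange axiom (M-EXC) with dom f ≠ ∅. Then x(N) = y(N) for every x, y ∈ dom f, i.e., dom f is contained in a hyperplane of the form {x : x(N) = r} for some integer r. -/
noncomputable section

open scoped BigOperators

/-! If `x, y ∈ dom f` and `y(N) < x(N)`, some `i` has `y i < x i`, and (M-EXC) yields a point
`x - χ_i + χ_j ∈ dom f` with the same coordinate sum as `x` but `‖· - y‖₁` smaller by two.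
Strong induction on `‖x - y‖₁` therefore gives `x(N) ≤ y(N)`, and by symmetry equality. -/

theorem EReal.ne_top_of_add_le_add {a b c d : EReal} (h : a + b ≤ c + d) (hb : b ≠ ⊥)
    (hc : c ≠ ⊤) (hd : d ≠ ⊤) : a ≠ ⊤ := by
  rintro rfl
  rw [EReal.top_add_of_ne_bot hb, top_le_iff] at h
  exact (EReal.add_lt_top hc hd).ne h

namespace chi

variable {n : ℕ}

@[simp]
theorem sum_eq_one (i : Fin n) : ∑ k, chi i k = 1 := by
  simp [chi]

@[simp]
theorem sum_sub_add (x : Fin n → ℤ) (i j : Fin n) : ∑ k, (x - chi i + chi j) k = ∑ k, x k := by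
  simp [Finset.sum_add_distrib, Finset.sum_sub_distrib]

theorem sum_natAbs_sub_add_sub {x y : Fin n → ℤ} {i j : Fin n} (hi : y i < x i)
    (hj : x j < y j) :
    ∑ k, ((x - chi i + chi j) k - y k).natAbs + 2 = ∑ k, (x k - y k).natAbs := by
  have hij : i ≠ j := by rintro rfl; omega
  have hk : ∀ k, (((x - chi i + chi j) k - y k).natAbs : ℤ)
      = (x k - y k).natAbs - (chi i k + chi j k) := by
    intro k
    simp only [Pi.add_apply, Pi.sub_apply, chi]
    rcases eq_or_ne k i with rfl | hki
    · simp only [if_neg hij]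
      omega
    · rcases eq_or_ne k j with rfl | hkj
      · simp only [if_neg hki]
        omega
      · simp only [if_neg hki, if_neg hkj]
        omega
  have hsum : ∑ k, (((x - chi i + chi j) k - y k).natAbs : ℤ)
      = ∑ k, ((x k - y k).natAbs : ℤ) - 2 := by
    simp only [hk, Finset.sum_sub_distrib, Finset.sum_add_distrib, sum_eq_one]
    ring
  rw [← Nat.cast_sum, ← Nat.cast_sum] at hsum
  omega

end chi

namespace MConvexFn

variable {n : ℕ} {f : (Fin n → ℤ) → EReal}

theorem exists_exchange_ne_top (hM : MConvexFn f) (hbot : NoBot f) {x y : Fin n → ℤ}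
    (hx : f x ≠ ⊤) (hy : f y ≠ ⊤) {i : Fin n} (hi : y i < x i) :
    ∃ j, x j < y j ∧ f (x - chi i + chi j) ≠ ⊤ := by
  obtain ⟨j, hj, hle⟩ := hM.2 x y hx hy i hi
  exact ⟨j, hj, EReal.ne_top_of_add_le_add hle (hbot _) hx hy⟩

theorem sum_le_sum (hM : MConvexFn f) (hbot : NoBot f) {x y : Fin n → ℤ}
    (hx : f x ≠ ⊤) (hy : f y ≠ ⊤) : ∑ k, x k ≤ ∑ k, y k := by
  by_contra! hlt
  obtain ⟨i, -, hi⟩ := Finset.exists_lt_of_sum_lt hlt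
  obtain ⟨j, hj, hx'⟩ := hM.exists_exchange_ne_top hbot hx hy hi
  have hdist := chi.sum_natAbs_sub_add_sub hi hj
  have hle := hM.sum_le_sum hbot hx' hy
  rw [chi.sum_sub_add] at hle
  exact hle.not_gt hlt
termination_by ∑ k, (x k - y k).natAbs
decreasing_by omega

end MConvexFn

theorem statement10_general {n : ℕ} (f : (Fin n → ℤ) → EReal)
    (hbot : NoBot f) (hM : MConvexFn f)
    (x y : Fin n → ℤ) (hx : f x ≠ ⊤) (hy : f y ≠ ⊤) :
    ∑ i, x i = ∑ i, y i :=
  (hM.sum_le_sum hbot hx hy).antisymm (hM.sum_le_sum hbot hy hx)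

/-- Under (M-EXC), all points of `dom f` have the same coordinate sum:
`x(N) = y(N)` for all `x, y ∈ dom f`. -/
theorem statement10 {n : ℕ} (hn : 1 ≤ n) (f : (Fin n → ℤ) → EReal)
    (hbot : NoBot f) (hM : MConvexFn f)
    (x y : Fin n → ℤ) (hx : f x ≠ ⊤) (hy : f y ≠ ⊤) :
    ∑ i, x i = ∑ i, y i :=
  statement10_general f hbot hM x y hx hy
end
end

section
/- Let f : ℝ^n → ℝ ∪ {+∞} be a polyhedral M-convex function with bounded nonempty effective domain. Then for all x, y ∈ dom f, it holds that f(y) − f(x) ≥ (1/2)‖y − x‖₁ · φ_ℝ(x). -/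
noncomputable section

open scoped BigOperators

/-- The `i`-th unit vector in `ℝ^n`. -/
def chiR {n : ℕ} (i : Fin n) : Fin n → ℝ := fun k => if k = i then 1 else 0

/-- The function never takes the value `-∞`, i.e. its codomain is `ℝ ∪ {+∞}`. -/
def NoBotR {n : ℕ} (f : (Fin n → ℝ) → EReal) : Prop := ∀ x, f x ≠ ⊥

/-- `f` is polyhedral convex: its epigraph is a nonempty intersection of finitely many
closed affine halfspaces. -/
def PolyhedralConvex {n : ℕ} (f : (Fin n → ℝ) → EReal) : Prop :=
  (∃ (x : Fin n → ℝ) (t : ℝ), f x ≤ (t : EReal)) ∧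
  ∃ (m : ℕ) (a : Fin m → Fin n → ℝ) (b c : Fin m → ℝ),
    ∀ (x : Fin n → ℝ) (t : ℝ),
      f x ≤ (t : EReal) ↔ ∀ k : Fin m, (∑ i, a k i * x i) + b k * t ≤ c k

/-- The exchange axiom (M-EXC[ℝ]). -/
def MExcR {n : ℕ} (f : (Fin n → ℝ) → EReal) : Prop :=
  ∀ x y : Fin n → ℝ, f x ≠ ⊤ → f y ≠ ⊤ →
    ∀ i : Fin n, y i < x i →
      ∃ j : Fin n, x j < y j ∧ ∃ ε₀ : ℝ, 0 < ε₀ ∧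
        ∀ ε : ℝ, 0 ≤ ε → ε ≤ ε₀ →
          f (x - ε • (chiR i - chiR j)) + f (y + ε • (chiR i - chiR j)) ≤ f x + f y

/-- Polyhedral M-convex function. -/
def PolyMConvex {n : ℕ} (f : (Fin n → ℝ) → EReal) : Prop :=
  PolyhedralConvex f ∧ MExcR f

/-- The directional derivative `f'_ℝ(x; i, j) = lim_{α ↓ 0} (f(x + α(χ_i - χ_j)) - f(x))/α`.
For a (polyhedral) convex function the difference quotient is nondecreasing in `α`, so the
limit equals the infimum of the difference quotients over `α > 0`. -/
def slopeR {n : ℕ} (f : (Fin n → ℝ) → EReal) (x : Fin n → ℝ) (i j : Fin n) : EReal :=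
  ⨅ α : {a : ℝ // 0 < a}, (f (x + α.1 • (chiR i - chiR j)) - f x) * (((α.1)⁻¹ : ℝ) : EReal)

/-- `φ_ℝ(x) = min_{i, j ∈ N} f'_ℝ(x; i, j)`. -/
def phiRp {n : ℕ} (f : (Fin n → ℝ) → EReal) (x : Fin n → ℝ) : EReal :=
  ⨅ i : Fin n, ⨅ j : Fin n, slopeR f x i j

/-- Bounded effective domain. -/
def BddDomR {n : ℕ} (f : (Fin n → ℝ) → EReal) : Prop :=
  ∃ C : ℝ, ∀ x : Fin n → ℝ, f x ≠ ⊤ → ∀ i, |x i| ≤ C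

/-!
Fix a real `p ≤ φ_ℝ(x)` and minimise `G(z) = f(z) - ½‖z - x‖₁ p` over `dom f`; among the minimisers
take one, `w`, closest to `x` in `ℓ₁`. Such minimisers exist because `dom f` is bounded and `G`
is lower semicontinuous, the epigraph of `f` being closed. If `w ≠ x`, exchanging `w` and `x`
along some `χ_i - χ_j` by a small `ε` decreases `‖w - x‖₁` by `2ε`, while the slope bound
`f(x + ε(χ_i - χ_j)) ≥ f(x) + εp` shows that the exchanged point `w'` has `G(w') ≤ G(w)`.
Hence `x` itself minimises `G`, i.e. `f(y) - f(x) ≥ ½‖y - x‖₁ p`.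
-/

open Set

theorem IsCompact.exists_isMinOn_lex {α β γ : Type*} [TopologicalSpace α] [LinearOrder β]
    [LinearOrder γ] {K : Set α} (hK : IsCompact K) (hne : K.Nonempty)
    {G : α → β} (hG : LowerSemicontinuous G) {N : α → γ} (hN : LowerSemicontinuousOn N K) :
    ∃ w ∈ K, IsMinOn G K w ∧ ∀ z ∈ K, G z ≤ G w → N w ≤ N z := by
  obtain ⟨y, hyK, hy⟩ := (hG.lowerSemicontinuousOn K).exists_isMinOn hne hK
  have hK' : IsCompact (K ∩ G ⁻¹' Iic (G y)) := hK.inter_right (hG.isClosed_preimage _)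
  obtain ⟨w, ⟨hwK, hwy⟩, hw⟩ := LowerSemicontinuousOn.exists_isMinOn
    (⟨y, hyK, le_rfl⟩ : (K ∩ G ⁻¹' Iic (G y)).Nonempty) hK' (hN.mono inter_subset_left)
  exact ⟨w, hwK, fun z hz => hwy.trans (hy hz), fun z hz hzw => hw ⟨hz, hzw.trans hwy⟩⟩

theorem EReal.coe_mul_le_of_forall_coe_le {a : ℝ} (ha : 0 < a) {φ d : EReal}
    (h : ∀ p : ℝ, (p : EReal) ≤ φ → ((a * p : ℝ) : EReal) ≤ d) : (a : EReal) * φ ≤ d := by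
  induction φ with
  | bot => simp [EReal.coe_mul_bot_of_pos ha]
  | coe q => exact_mod_cast h q le_rfl
  | top =>
    rw [EReal.coe_mul_top_of_pos ha, top_le_iff, EReal.eq_top_iff_forall_lt]
    intro r
    calc (r : EReal) < ((a * ((r + 1) / a) : ℝ) : EReal) := by
          rw [mul_div_cancel₀ _ ha.ne']; exact_mod_cast lt_add_one r
      _ ≤ d := h _ le_top

theorem lowerSemicontinuous_sub_coe_of_isClosed {X : Type*} [TopologicalSpace X] {f : X → EReal}
    (hf : IsClosed {q : X × ℝ | f q.1 ≤ q.2}) {g : X → ℝ} (hg : Continuous g) :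
    LowerSemicontinuous fun z => f z - g z := by
  rw [lowerSemicontinuous_iff_isClosed_preimage]
  intro y
  have hsub : ∀ z (t : ℝ), f z - g z ≤ t ↔ f z ≤ ((t + g z : ℝ) : EReal) := fun z t => by
    rw [EReal.sub_le_iff_le_add (.inl (EReal.coe_ne_bot _)) (.inl (EReal.coe_ne_top _))]
    norm_cast
  have hpre : (fun z => f z - g z) ⁻¹' Iic y =
      ⋂ (t : ℝ) (_ : y < t), (fun z => (z, t + g z)) ⁻¹' {q : X × ℝ | f q.1 ≤ q.2} := by
    ext z
    simp only [mem_preimage, mem_Iic, mem_iInter, mem_ofPred_eq, ← hsub]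
    exact EReal.le_of_forall_lt_iff_le.symm
  rw [hpre]
  exact isClosed_biInter fun t _ => hf.preimage (by fun_prop)

variable {n : ℕ} {f : (Fin n → ℝ) → EReal}

theorem chiR_apply (i k : Fin n) : chiR i k = if k = i then 1 else 0 := rfl

theorem NoBotR.exists_eq_coe (hf : NoBotR f) {z : Fin n → ℝ} (hz : f z ≠ ⊤) :
    ∃ r : ℝ, f z = r :=
  ⟨(f z).toReal, (EReal.coe_toReal hz (hf z)).symm⟩

theorem PolyhedralConvex.isClosed_epigraph (hf : PolyhedralConvex f) :
    IsClosed {q : (Fin n → ℝ) × ℝ | f q.1 ≤ q.2} := by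
  obtain ⟨-, m, a, b, c, H⟩ := hf
  have hepi : {q : (Fin n → ℝ) × ℝ | f q.1 ≤ q.2} =
      ⋂ k, {q | ∑ i, a k i * q.1 i + b k * q.2 ≤ c k} := by
    ext q
    simp [H]
  rw [hepi]
  exact isClosed_iInter fun k => isClosed_le (by fun_prop) continuous_const

theorem BddDomR.exists_isCompact (hf : BddDomR f) :
    ∃ K : Set (Fin n → ℝ), IsCompact K ∧ ∀ z, f z ≠ ⊤ → z ∈ K := by
  obtain ⟨C, hC⟩ := hf
  exact ⟨univ.pi fun _ => Icc (-C) C, isCompact_univ_pi fun _ => isCompact_Icc,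
    fun z hz => mem_univ_pi.2 fun i => abs_le.1 (hC z hz i)⟩

theorem sum_abs_sub_smul_chiR_sub_chiR {x w : Fin n → ℝ} {i j : Fin n} {ε : ℝ} (hε : 0 < ε)
    (hi : x i + ε ≤ w i) (hj : w j + ε ≤ x j) :
    ∑ k, |(w - ε • (chiR i - chiR j)) k - x k| = ∑ k, |w k - x k| - 2 * ε := by
  have hij : i ≠ j := by rintro rfl; linarith
  have hk : ∀ k, |(w - ε • (chiR i - chiR j)) k - x k|
      = |w k - x k| + ((if k = i then -ε else 0) + (if k = j then -ε else 0)) := by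
    intro k
    simp only [Pi.sub_apply, Pi.smul_apply, chiR_apply, smul_eq_mul]
    by_cases hki : k = i
    · subst hki
      simp only [if_true, if_neg hij]
      rw [abs_of_nonneg (by linarith), abs_of_nonneg (by linarith)]
      ring
    · by_cases hkj : k = j
      · subst hkj
        simp only [if_true, if_neg hki]
        rw [abs_of_nonpos (by linarith), abs_of_nonpos (by linarith)]
        ring
      · simp only [if_neg hki, if_neg hkj]
        ring_nf
  simp only [hk, Finset.sum_add_distrib, Finset.sum_ite_eq', Finset.mem_univ, if_true]
  ring

theorem MExcR.exists_exchange (hf : MExcR f) {u v : Fin n → ℝ} (hu : f u ≠ ⊤) (hv : f v ≠ ⊤)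
    {i : Fin n} (hi : v i < u i) :
    ∃ j ε, 0 < ε ∧ v i + ε ≤ u i ∧ u j + ε ≤ v j ∧
      f (u - ε • (chiR i - chiR j)) + f (v + ε • (chiR i - chiR j)) ≤ f u + f v := by
  obtain ⟨j, hj, ε₀, hε₀, h⟩ := hf u v hu hv i hi
  refine ⟨j, min ε₀ (min (u i - v i) (v j - u j)), lt_min hε₀ (lt_min (by linarith) (by linarith)),
    ?_, ?_, h _ (le_min hε₀.le (le_min (by linarith) (by linarith))) (min_le_left _ _)⟩
  · linarith [min_le_left (u i - v i) (v j - u j), min_le_right ε₀ (min (u i - v i) (v j - u j))]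
  · linarith [min_le_right (u i - v i) (v j - u j), min_le_right ε₀ (min (u i - v i) (v j - u j))]

theorem MExcR.exists_exchange_toward (hf : MExcR f) {x w : Fin n → ℝ} (hx : f x ≠ ⊤)
    (hw : f w ≠ ⊤) (hwx : w ≠ x) :
    ∃ i j ε, 0 < ε ∧ x i + ε ≤ w i ∧ w j + ε ≤ x j ∧
      f (x + ε • (chiR i - chiR j)) + f (w - ε • (chiR i - chiR j)) ≤ f x + f w := by
  obtain ⟨i, hi⟩ := Function.ne_iff.1 hwx
  rcases hi.lt_or_gt with hlt | hgt
  · obtain ⟨j, ε, hε, hi, hj, h⟩ := hf.exists_exchange hx hw hlt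
    have hswap : ε • (chiR j - chiR i) = -(ε • (chiR i - chiR j)) := by rw [← smul_neg, neg_sub]
    refine ⟨j, i, ε, hε, hj, hi, ?_⟩
    rwa [hswap, ← sub_eq_add_neg, sub_neg_eq_add]
  · obtain ⟨j, ε, hε, hi, hj, h⟩ := hf.exists_exchange hw hx hgt
    exact ⟨i, j, ε, hε, hi, hj, by rwa [add_comm, add_comm (f x)]⟩

theorem add_coe_mul_le_of_coe_le_slopeR (hbot : NoBotR f) {x : Fin n → ℝ} (hx : f x ≠ ⊤)
    {i j : Fin n} {p : ℝ} (hp : (p : EReal) ≤ slopeR f x i j) {ε : ℝ} (hε : 0 < ε) :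
    f x + ((ε * p : ℝ) : EReal) ≤ f (x + ε • (chiR i - chiR j)) := by
  have hq := hp.trans (iInf_le _ ⟨ε, hε⟩)
  by_cases htop : f (x + ε • (chiR i - chiR j)) = ⊤
  · simp [htop]
  obtain ⟨a, ha⟩ := hbot.exists_eq_coe hx
  obtain ⟨b, hb⟩ := hbot.exists_eq_coe htop
  simp only [ha, hb] at hq ⊢
  norm_cast at hq ⊢
  rw [le_mul_inv_iff₀ hε] at hq
  linarith

theorem MExcR.exists_descent (hf : MExcR f) (hbot : NoBotR f) {x w : Fin n → ℝ}
    (hx : f x ≠ ⊤) (hw : f w ≠ ⊤) (hwx : w ≠ x) {p : ℝ} (hp : (p : EReal) ≤ phiRp f x) :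
    ∃ w', f w' ≠ ⊤ ∧ ∑ k, |w' k - x k| < ∑ k, |w k - x k| ∧
      f w' - (((∑ k, |w' k - x k|) / 2 * p : ℝ) : EReal) ≤
        f w - (((∑ k, |w k - x k|) / 2 * p : ℝ) : EReal) := by
  obtain ⟨i, j, ε, hε, hi, hj, hexc⟩ := hf.exists_exchange_toward hx hw hwx
  have hslope := add_coe_mul_le_of_coe_le_slopeR hbot hx
    (hp.trans ((iInf_le _ i).trans (iInf_le _ j))) hε
  obtain ⟨a, ha⟩ := hbot.exists_eq_coe hx
  obtain ⟨b, hb⟩ := hbot.exists_eq_coe hw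
  have hfin : f (x + ε • (chiR i - chiR j)) + f (w - ε • (chiR i - chiR j)) ≠ ⊤ :=
    ne_top_of_le_ne_top (by rw [ha, hb, ← EReal.coe_add]; exact EReal.coe_ne_top _) hexc
  obtain ⟨hx'top, hw'top⟩ := (EReal.add_ne_top_iff_ne_top₂ (hbot _) (hbot _)).1 hfin
  obtain ⟨a', ha'⟩ := hbot.exists_eq_coe hx'top
  obtain ⟨b', hb'⟩ := hbot.exists_eq_coe hw'top
  refine ⟨_, hw'top, ?_, ?_⟩
  · rw [sum_abs_sub_smul_chiR_sub_chiR hε hi hj]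
    linarith
  · rw [sum_abs_sub_smul_chiR_sub_chiR hε hi hj]
    simp only [ha, hb, ha', hb'] at hexc hslope ⊢
    norm_cast at hexc hslope ⊢
    linarith

theorem PolyMConvex.coe_mul_le_sub_of_coe_le_phiRp (hbot : NoBotR f) (hM : PolyMConvex f)
    (hbdd : BddDomR f) {x y : Fin n → ℝ} (hx : f x ≠ ⊤) (hy : f y ≠ ⊤) {p : ℝ}
    (hp : (p : EReal) ≤ phiRp f x) :
    (((∑ k, |y k - x k|) / 2 * p : ℝ) : EReal) ≤ f y - f x := by
  obtain ⟨K, hK, hdomK⟩ := hbdd.exists_isCompact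
  set N : (Fin n → ℝ) → ℝ := fun z => ∑ k, |z k - x k|
  set G : (Fin n → ℝ) → EReal := fun z => f z - ((N z / 2 * p : ℝ) : EReal)
  have hG : LowerSemicontinuous G :=
    lowerSemicontinuous_sub_coe_of_isClosed hM.1.isClosed_epigraph (by fun_prop)
  obtain ⟨w, hwK, hGmin, hNmin⟩ :=
    hK.exists_isMinOn_lex ⟨x, hdomK x hx⟩ hG
      ((by fun_prop : Continuous N).lowerSemicontinuous.lowerSemicontinuousOn K)
  have hGx : G x = f x := by simp [G, N]
  have hw : f w ≠ ⊤ := by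
    intro h
    have := hGmin (hdomK x hx)
    simp only [G, h, EReal.top_sub_coe, top_le_iff] at this
    exact hx (hGx ▸ this)
  obtain rfl : w = x := by
    by_contra hwx
    obtain ⟨w', hw', hNw', hGw'⟩ := hM.2.exists_descent hbot hx hw hwx hp
    exact (hNmin w' (hdomK w' hw') hGw').not_gt hNw'
  have hxy : G w ≤ G y := hGmin (hdomK y hy)
  obtain ⟨a, ha⟩ := hbot.exists_eq_coe hx
  obtain ⟨b, hb⟩ := hbot.exists_eq_coe hy
  simp only [hGx, G, ha, hb] at hxy ⊢
  norm_cast at hxy ⊢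
  linarith

theorem statement14_general {n : ℕ} (f : (Fin n → ℝ) → EReal)
    (hbot : NoBotR f) (hM : PolyMConvex f) (hbdd : BddDomR f)
    (x y : Fin n → ℝ) (hx : f x ≠ ⊤) (hy : f y ≠ ⊤) :
    (((∑ i, |y i - x i|) / 2 : ℝ) : EReal) * phiRp f x ≤ f y - f x := by
  rcases eq_or_ne y x with rfl | hyx
  · simp [EReal.sub_self hy (hbot y)]
  have hpos : 0 < (∑ i, |y i - x i|) / 2 := by
    obtain ⟨i, hi⟩ := Function.ne_iff.1 hyx
    have := Finset.single_le_sum (fun k _ => abs_nonneg (y k - x k)) (Finset.mem_univ i)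
    have := abs_pos.2 (sub_ne_zero.2 hi)
    linarith
  exact EReal.coe_mul_le_of_forall_coe_le hpos fun p hp =>
    hM.coe_mul_le_sub_of_coe_le_phiRp hbot hbdd hx hy hp

/-- Lower bound by the steepest descent slope: for all `x, y ∈ dom f`,
`f(y) - f(x) ≥ (1/2) ‖y - x‖₁ · φ_ℝ(x)`. -/
theorem statement14 {n : ℕ} (hn : 1 ≤ n) (f : (Fin n → ℝ) → EReal)
    (hbot : NoBotR f) (hM : PolyMConvex f) (hbdd : BddDomR f)
    (x y : Fin n → ℝ) (hx : f x ≠ ⊤) (hy : f y ≠ ⊤) :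
    (((∑ i, |y i - x i|) / 2 : ℝ) : EReal) * phiRp f x ≤ f y - f x :=
  statement14_general f hbot hM hbdd x y hx hy
end
end

section
/- Let f : ℝ^n → ℝ ∪ {+∞} be a polyhedral M-convex function with bounded nonempty effective domain. Let y ∈ dom f with φ_ℝ(y) < 0, let i, j ∈ N be distinct elements such that f'_ℝ(y; i, j) = φ_ℝ(y), let λ > 0 satisfy f(y + λ(χ_i − χ_j)) − f(y) = λ φ_ℝ(y), and set ŷ = y + λ(χ_i − χ_j). Then for all distinct h, k ∈ N, it holds that f'_ℝ(ŷ; h, k) ≥ φ_ℝ(y); moreover, if f'_ℝ(ŷ; h, k) = φ_ℝ(y), then f'_ℝ(ŷ; h, k) = φ_ℝ(ŷ) (i.e., +χ_h − χ_k is a steepest descent direction at ŷ) and k ≠ i and h ≠ j. -/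
/-!
Write `ŷ = y + λ(χ_i - χ_j)` and `φ = φ_ℝ(y)`. Repeated exchanges (M-EXC[ℝ]), each paying at
most `φ` per unit moved, give `f z ≥ f y + φ ‖(z - y)⁺‖₁` for every `z` with the same
coordinate sum as `y`; the repetition is made rigorous by minimising `‖(· - y)⁺‖₁` over a
compact sublevel set, which is where the bounded domain enters. Since `f ŷ = f y + λφ` and
`‖(ŷ + α(χ_h - χ_k) - y)⁺‖₁ ≤ λ + α`, every slope at `ŷ` is at least `φ`. If `k = i` or
`h = j`, the excess stays `≤ λ` for `α ≤ λ`, so `f` does not drop below `f ŷ` along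
`χ_h - χ_k` for steps up to `λ`, and by convexity that slope is `≥ 0 > φ`.
-/

noncomputable section

open scoped BigOperators

section Excess

variable {n : ℕ}

lemma sum_chiR (i : Fin n) : ∑ p, chiR i p = 1 := by simp [chiR]

lemma sum_add_smul_chiR_sub_chiR (x : Fin n → ℝ) (c : ℝ) (i j : Fin n) :
    ∑ p, (x + c • (chiR i - chiR j)) p = ∑ p, x p := by
  simp only [Pi.add_apply, Pi.smul_apply, Pi.sub_apply, smul_eq_mul, mul_sub,
    Finset.sum_add_distrib, Finset.sum_sub_distrib, ← Finset.mul_sum, sum_chiR, sub_self,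
    add_zero]

/-- `‖(z - x)⁺‖₁`. -/
def excess (x z : Fin n → ℝ) : ℝ := ∑ p, max (z p - x p) 0

lemma continuous_excess (x : Fin n → ℝ) : Continuous (excess x) := by
  unfold excess
  fun_prop

lemma excess_nonneg (x z : Fin n → ℝ) : 0 ≤ excess x z :=
  Finset.sum_nonneg fun _ _ => le_max_right _ _

@[simp]
lemma excess_self (x : Fin n → ℝ) : excess x x = 0 := by
  simp [excess]

lemma excess_le_add (x w z : Fin n → ℝ) : excess x z ≤ excess x w + excess w z := by
  rw [excess, excess, excess, ← Finset.sum_add_distrib]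
  refine Finset.sum_le_sum fun p _ => max_le ?_ (add_nonneg (le_max_right _ _) (le_max_right _ _))
  linarith [le_max_left (w p - x p) 0, le_max_left (z p - w p) 0]

lemma excess_add_smul_le (x : Fin n → ℝ) {c : ℝ} (hc : 0 ≤ c) (i j : Fin n) :
    excess x (x + c • (chiR i - chiR j)) ≤ c := by
  calc excess x (x + c • (chiR i - chiR j)) ≤ ∑ p, c * chiR i p := by
        refine Finset.sum_le_sum fun p _ => ?_
        simp only [Pi.add_apply, Pi.smul_apply, Pi.sub_apply, smul_eq_mul, add_sub_cancel_left,
          chiR]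
        split_ifs <;> simp [hc]
    _ = c := by rw [← Finset.mul_sum, sum_chiR, mul_one]

lemma excess_add_smul_chiR_sub_chiR {x w : Fin n → ℝ} {p q : Fin n} {ε : ℝ} (hpq : p ≠ q)
    (hp : ε ≤ w p - x p) (hq : ε ≤ x q - w q) (hε : 0 ≤ ε) :
    excess x (w + ε • (chiR q - chiR p)) = excess x w - ε := by
  have hterm : ∀ t, max ((w + ε • (chiR q - chiR p)) t - x t) 0
      = max (w t - x t) 0 - ε * chiR p t := by
    intro t
    simp only [Pi.add_apply, Pi.smul_apply, Pi.sub_apply, smul_eq_mul, chiR]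
    rcases eq_or_ne t p with rfl | htp
    · simp only [if_neg hpq, ↓reduceIte]
      rw [max_eq_left (by linarith), max_eq_left (by linarith)]
      ring
    rcases eq_or_ne t q with rfl | htq
    · simp only [if_neg htp, ↓reduceIte]
      rw [max_eq_right (by linarith), max_eq_right (by linarith)]
      ring
    · simp [htp, htq]
  rw [excess, Finset.sum_congr rfl fun t _ => hterm t, Finset.sum_sub_distrib, ← Finset.mul_sum,
    sum_chiR, mul_one, excess]

lemma eq_of_excess_eq_zero {x z : Fin n → ℝ} (hsum : ∑ p, z p = ∑ p, x p)
    (h : excess x z = 0) : z = x := by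
  have hle : ∀ p, z p ≤ x p := fun p => by
    have := (Finset.sum_eq_zero_iff_of_nonneg fun p _ => le_max_right (z p - x p) 0).1 h p
      (Finset.mem_univ p)
    linarith [le_max_left (z p - x p) 0]
  funext p
  exact (Finset.sum_eq_sum_iff_of_le fun p _ => hle p).1 hsum p (Finset.mem_univ p)

end Excess

section PolyMConvex

variable {n : ℕ} {f : (Fin n → ℝ) → EReal}

lemma NoBotR.exists_eq_coe_s16 (hbot : NoBotR f) {x : Fin n → ℝ} (hx : f x ≠ ⊤) :
    ∃ a : ℝ, f x = a :=
  ⟨(f x).toReal, (EReal.coe_toReal hx (hbot x)).symm⟩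

lemma coe_le_sub_coe_mul_inv_iff {F : EReal} {a c α : ℝ} (hα : 0 < α) :
    (c : EReal) ≤ (F - a) * ((α⁻¹ : ℝ) : EReal) ↔ ((a + c * α : ℝ) : EReal) ≤ F := by
  induction F using EReal.rec with
  | bot => simp only [EReal.bot_sub, EReal.bot_mul_coe_of_pos (inv_pos.2 hα), le_bot_iff,
      EReal.coe_ne_bot]
  | top => simp [EReal.top_mul_coe_of_pos (inv_pos.2 hα)]
  | coe s =>
    norm_cast
    rw [← div_eq_mul_inv, le_div_iff₀ hα]
    constructor <;> intro <;> linarith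

lemma exists_coe_eq_of_sub_coe_eq_mul {F P : EReal} {a lam : ℝ} (hF : F ≠ ⊥) (hP : P ≠ ⊤)
    (hlam : 0 < lam) (h : F - a = lam * P) :
    ∃ φ : ℝ, P = φ ∧ F = ((a + lam * φ : ℝ) : EReal) := by
  induction P using EReal.rec with
  | top => exact absurd rfl hP
  | bot =>
    rw [EReal.coe_mul_bot_of_pos hlam] at h
    induction F using EReal.rec with
    | bot => exact absurd rfl hF
    | top => simp at h
    | coe s => exact absurd h (by norm_cast)
  | coe φ =>
    refine ⟨φ, rfl, ?_⟩
    induction F using EReal.rec with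
    | bot => exact absurd rfl hF
    | top =>
      rw [EReal.top_sub_coe, ← EReal.coe_mul] at h
      exact absurd h (EReal.top_ne_coe _)
    | coe s =>
      norm_cast at h ⊢
      linarith

lemma coe_le_slopeR_iff {x : Fin n → ℝ} {a c : ℝ} (hx : f x = a) (i j : Fin n) :
    (c : EReal) ≤ slopeR f x i j ↔
      ∀ α : ℝ, 0 < α → ((a + c * α : ℝ) : EReal) ≤ f (x + α • (chiR i - chiR j)) := by
  simp only [slopeR, le_iInf_iff, Subtype.forall, hx]
  exact forall₂_congr fun α hα => coe_le_sub_coe_mul_inv_iff hα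

lemma phiRp_le_slopeR (f : (Fin n → ℝ) → EReal) (x : Fin n → ℝ) (i j : Fin n) :
    phiRp f x ≤ slopeR f x i j := by
  unfold phiRp
  exact iInf_le_of_le i (iInf_le (fun j => slopeR f x i j) j)

lemma PolyhedralConvex.apply_convexComb_le (hf : PolyhedralConvex f) {u v : Fin n → ℝ}
    {r s t : ℝ} (ht₀ : 0 ≤ t) (ht₁ : t ≤ 1) (hu : f u ≤ r) (hv : f v ≤ s) :
    f ((1 - t) • u + t • v) ≤ (((1 - t) * r + t * s : ℝ) : EReal) := by
  obtain ⟨-, m, a, b, c, hf⟩ := hf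
  rw [hf] at hu hv ⊢
  intro k
  have hlin : ∑ p, a k p * ((1 - t) • u + t • v) p
      = (1 - t) * ∑ p, a k p * u p + t * ∑ p, a k p * v p := by
    simp only [Pi.add_apply, Pi.smul_apply, smul_eq_mul, Finset.mul_sum, ← Finset.sum_add_distrib]
    exact Finset.sum_congr rfl fun p _ => by ring
  rw [hlin]
  nlinarith [mul_le_mul_of_nonneg_left (hu k) (sub_nonneg.2 ht₁),
    mul_le_mul_of_nonneg_left (hv k) ht₀]

lemma PolyhedralConvex.coe_le_slopeR_of_forall_le (hf : PolyhedralConvex f) (hbot : NoBotR f)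
    {x : Fin n → ℝ} {a c δ : ℝ} (hx : f x = a) {i j : Fin n} (hδ : 0 < δ)
    (h : ∀ α : ℝ, 0 < α → α ≤ δ →
      ((a + c * α : ℝ) : EReal) ≤ f (x + α • (chiR i - chiR j))) :
    (c : EReal) ≤ slopeR f x i j := by
  rw [coe_le_slopeR_iff hx]
  intro α hα
  rcases le_or_gt α δ with hαδ | hδα
  · exact h α hα hαδ
  by_cases htop : f (x + α • (chiR i - chiR j)) = ⊤
  · simp [htop]
  obtain ⟨s, hs⟩ := hbot.exists_eq_coe_s16 htop
  have ht : 0 < δ / α := div_pos hδ hα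
  have hseg : (1 - δ / α) • x + (δ / α) • (x + α • (chiR i - chiR j))
      = x + δ • (chiR i - chiR j) := by
    rw [smul_add, smul_smul, div_mul_cancel₀ δ hα.ne']
    module
  have hconv := hf.apply_convexComb_le ht.le ((div_le_one hα).2 hδα.le) hx.le hs.le
  rw [hseg] at hconv
  have hδ' : a + c * δ ≤ (1 - δ / α) * a + δ / α * s := by
    exact_mod_cast (h δ hδ le_rfl).trans hconv
  have hmul : δ / α * (c * α) ≤ δ / α * (s - a) := by
    rw [show δ / α * (c * α) = c * δ by field_simp]
    linarith
  rw [hs]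
  exact_mod_cast (by linarith [le_of_mul_le_mul_left hmul ht] : a + c * α ≤ s)

lemma PolyhedralConvex.isClosed_setOf_le (hf : PolyhedralConvex f) {r : (Fin n → ℝ) → ℝ}
    (hr : Continuous r) : IsClosed {u | f u ≤ (r u : EReal)} := by
  obtain ⟨-, m, a, b, c, hf⟩ := hf
  simp only [hf, Set.ofPred_forall]
  exact isClosed_iInter fun k => isClosed_le (by fun_prop) continuous_const

lemma BddDomR.isCompact (hbdd : BddDomR f) {K : Set (Fin n → ℝ)} (hK : IsClosed K)
    (hKdom : ∀ u ∈ K, f u ≠ ⊤) : IsCompact K := by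
  obtain ⟨C, hC⟩ := hbdd
  refine (isCompact_closedBall (0 : Fin n → ℝ) (max C 0)).of_isClosed_subset hK fun u hu => ?_
  rw [mem_closedBall_zero_iff, pi_norm_le_iff_of_nonneg (le_max_right C 0)]
  exact fun p => (hC u (hKdom u hu) p).trans (le_max_left _ _)

lemma MExcR.exists_excess_lt (hexc : MExcR f) {x w : Fin n → ℝ} {a b φ : ℝ} (hx : f x = a)
    (hsl : ∀ p q, (φ : EReal) ≤ slopeR f x p q) (hw : f w = b) (hpos : 0 < excess x w) :
    ∃ u, ∑ p, u p = ∑ p, w p ∧ excess x u < excess x w ∧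
      f u ≤ ((b + φ * (excess x u - excess x w) : ℝ) : EReal) := by
  obtain ⟨p, -, hp⟩ := Finset.exists_lt_of_sum_lt (by simpa [excess] using hpos :
    ∑ _p : Fin n, (0 : ℝ) < ∑ p, max (w p - x p) 0)
  have hp : x p < w p := by simpa using hp
  obtain ⟨q, hq, ε₀, hε₀, hexch⟩ := hexc w x (by simp [hw]) (by simp [hx]) p hp
  have hpq : p ≠ q := by rintro rfl; linarith
  set ε := min ε₀ (min (w p - x p) (x q - w q))
  have hε : 0 < ε := lt_min hε₀ (lt_min (by linarith) (by linarith))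
  have hεp : ε ≤ w p - x p := (min_le_right _ _).trans (min_le_left _ _)
  have hεq : ε ≤ x q - w q := (min_le_right _ _).trans (min_le_right _ _)
  refine ⟨w + ε • (chiR q - chiR p), sum_add_smul_chiR_sub_chiR w ε q p, ?_, ?_⟩ <;>
    rw [excess_add_smul_chiR_sub_chiR hpq hεp hεq hε.le]
  · linarith
  have hmove : ((a + φ * ε : ℝ) : EReal) ≤ f (x + ε • (chiR p - chiR q)) :=
    (coe_le_slopeR_iff hx p q).1 (hsl p q) ε hε
  have hpair :
      f (w + ε • (chiR q - chiR p)) + ((a + φ * ε : ℝ) : EReal) ≤ ((b + a : ℝ) : EReal) :=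
    calc _ ≤ f (w - ε • (chiR p - chiR q)) + f (x + ε • (chiR p - chiR q)) := by
          rw [show w - ε • (chiR p - chiR q) = w + ε • (chiR q - chiR p) by module]
          exact add_le_add_right hmove _
      _ ≤ f w + f x := hexch ε hε.le (min_le_left _ _)
      _ = ((b + a : ℝ) : EReal) := by rw [hw, hx, EReal.coe_add]
  rw [show b + φ * (excess x w - ε - excess x w) = (b + a) - (a + φ * ε) by ring, EReal.coe_sub,
    EReal.le_sub_iff_add_le (Or.inl (EReal.coe_ne_bot _)) (Or.inl (EReal.coe_ne_top _))]
  exact hpair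

theorem PolyMConvex.coe_add_mul_excess_le (hM : PolyMConvex f) (hbot : NoBotR f)
    (hbdd : BddDomR f) {x z : Fin n → ℝ} {a φ : ℝ} (hx : f x = a)
    (hsl : ∀ p q, (φ : EReal) ≤ slopeR f x p q) (hsum : ∑ p, z p = ∑ p, x p) :
    ((a + φ * excess x z : ℝ) : EReal) ≤ f z := by
  by_cases hz : f z = ⊤
  · simp [hz]
  obtain ⟨b, hb⟩ := hbot.exists_eq_coe_s16 hz
  set r : (Fin n → ℝ) → ℝ := fun u => b + φ * (excess x u - excess x z)
  set K := {u : Fin n → ℝ | ∑ p, u p = ∑ p, x p} ∩ {u | f u ≤ (r u : EReal)}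
  have hKdom : ∀ u ∈ K, f u ≠ ⊤ := fun u hu => ne_top_of_le_ne_top (EReal.coe_ne_top _) hu.2
  have hK : IsCompact K := hbdd.isCompact ((isClosed_eq (by fun_prop) continuous_const).inter
    (hM.1.isClosed_setOf_le
      (continuous_const.add (continuous_const.mul ((continuous_excess x).sub continuous_const)))))
    hKdom
  obtain ⟨w, hwK, hwmin⟩ := hK.exists_isMinOn ⟨z, hsum, by simp [r, hb]⟩
    (continuous_excess x).continuousOn
  have hwf : f w ≤ (r w : EReal) := hwK.2
  obtain ⟨c, hc⟩ := hbot.exists_eq_coe_s16 (hKdom w hwK)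
  have hw0 : excess x w = 0 := by
    by_contra hne
    obtain ⟨u, hsu, hlt, hfu⟩ :=
      hM.2.exists_excess_lt hx hsl hc ((excess_nonneg x w).lt_of_ne (Ne.symm hne))
    have hcw : c ≤ r w := by rwa [hc, EReal.coe_le_coe_iff] at hwf
    have huK : u ∈ K := ⟨hsu.trans hwK.1,
      hfu.trans (by simp only [r] at hcw ⊢; exact_mod_cast (by linarith))⟩
    exact (isMinOn_iff.1 hwmin u huK).not_gt hlt
  have hax : a ≤ r x := by
    rwa [eq_of_excess_eq_zero hwK.1 hw0, hx, EReal.coe_le_coe_iff] at hwf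
  simp only [r, excess_self] at hax
  rw [hb]
  exact_mod_cast (by linarith)

lemma coe_le_slopeR_of_descent_step (hM : PolyMConvex f) (hbot : NoBotR f) (hbdd : BddDomR f)
    {y : Fin n → ℝ} {a φ lam : ℝ} {i j : Fin n} (hy : f y = a)
    (hsl : ∀ p q, (φ : EReal) ≤ slopeR f y p q) (hφ : φ ≤ 0) (hlam : 0 ≤ lam)
    (hstep : f (y + lam • (chiR i - chiR j)) = ((a + lam * φ : ℝ) : EReal)) (h k : Fin n) :
    (φ : EReal) ≤ slopeR f (y + lam • (chiR i - chiR j)) h k := by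
  rw [coe_le_slopeR_iff hstep]
  intro α hα
  set z := y + lam • (chiR i - chiR j) + α • (chiR h - chiR k)
  have hex : excess y z ≤ lam + α := (excess_le_add y _ z).trans
    (add_le_add (excess_add_smul_le y hlam i j) (excess_add_smul_le _ hα.le h k))
  have hsum : ∑ p, z p = ∑ p, y p := by
    rw [sum_add_smul_chiR_sub_chiR, sum_add_smul_chiR_sub_chiR]
  calc ((a + lam * φ + φ * α : ℝ) : EReal) ≤ ((a + φ * excess y z : ℝ) : EReal) := by
        exact_mod_cast (by nlinarith : a + lam * φ + φ * α ≤ a + φ * excess y z)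
    _ ≤ f z := hM.coe_add_mul_excess_le hbot hbdd hy hsl hsum

lemma nonneg_slopeR_of_descent_step (hM : PolyMConvex f) (hbot : NoBotR f) (hbdd : BddDomR f)
    {y : Fin n → ℝ} {a φ lam : ℝ} {i j : Fin n} (hy : f y = a)
    (hsl : ∀ p q, (φ : EReal) ≤ slopeR f y p q) (hφ : φ ≤ 0) (hlam : 0 < lam)
    (hstep : f (y + lam • (chiR i - chiR j)) = ((a + lam * φ : ℝ) : EReal)) {h k : Fin n}
    (hhk : k = i ∨ h = j) :
    0 ≤ slopeR f (y + lam • (chiR i - chiR j)) h k := by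
  rw [← EReal.coe_zero]
  refine hM.1.coe_le_slopeR_of_forall_le hbot hstep hlam fun α hα hαlam => ?_
  obtain ⟨h', k', hz⟩ : ∃ h' k', y + lam • (chiR i - chiR j) + α • (chiR h - chiR k)
      = y + (lam - α) • (chiR i - chiR j) + α • (chiR h' - chiR k') := by
    rcases hhk with rfl | rfl
    exacts [⟨h, j, by module⟩, ⟨i, k, by module⟩]
  set z := y + lam • (chiR i - chiR j) + α • (chiR h - chiR k)
  have hex : excess y z ≤ lam := by
    rw [hz]
    calc _ ≤ (lam - α) + α := (excess_le_add y _ _).trans (add_le_add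
          (excess_add_smul_le y (sub_nonneg.2 hαlam) i j) (excess_add_smul_le _ hα.le h' k'))
      _ = lam := by ring
  have hsum : ∑ p, z p = ∑ p, y p := by
    rw [sum_add_smul_chiR_sub_chiR, sum_add_smul_chiR_sub_chiR]
  calc ((a + lam * φ + 0 * α : ℝ) : EReal) ≤ ((a + φ * excess y z : ℝ) : EReal) := by
        exact_mod_cast (by nlinarith : a + lam * φ + 0 * α ≤ a + φ * excess y z)
    _ ≤ f z := hM.coe_add_mul_excess_le hbot hbdd hy hsl hsum

end PolyMConvex

theorem statement16_general {n : ℕ} (f : (Fin n → ℝ) → EReal)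
    (hbot : NoBotR f) (hM : PolyMConvex f) (hbdd : BddDomR f)
    (y : Fin n → ℝ) (hy : f y ≠ ⊤) (hphi : phiRp f y < 0)
    (i j : Fin n) (lam : ℝ) (hlam : 0 < lam)
    (hstep : f (y + lam • (chiR i - chiR j)) - f y = (lam : EReal) * phiRp f y) :
    ∀ h k : Fin n, h ≠ k →
      phiRp f y ≤ slopeR f (y + lam • (chiR i - chiR j)) h k ∧
      (slopeR f (y + lam • (chiR i - chiR j)) h k = phiRp f y →
        slopeR f (y + lam • (chiR i - chiR j)) h k =
            phiRp f (y + lam • (chiR i - chiR j)) ∧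
          k ≠ i ∧ h ≠ j) := by
  obtain ⟨a, ha⟩ := hbot.exists_eq_coe_s16 hy
  rw [ha] at hstep
  obtain ⟨φ, hφ, hyh⟩ := exists_coe_eq_of_sub_coe_eq_mul (hbot _) hphi.ne_top hlam hstep
  rw [hφ] at hphi ⊢
  have hφ0 : φ < 0 := by exact_mod_cast hphi
  have hsl : ∀ p q, (φ : EReal) ≤ slopeR f y p q := fun p q => hφ ▸ phiRp_le_slopeR f y p q
  have hlow := coe_le_slopeR_of_descent_step hM hbot hbdd ha hsl hφ0.le hlam.le hyh
  have hnonneg {h k : Fin n} (hhk : k = i ∨ h = j) :=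
    nonneg_slopeR_of_descent_step hM hbot hbdd ha hsl hφ0.le hlam hyh hhk
  intro h k _
  refine ⟨hlow h k, fun heq => ⟨?_, ?_, ?_⟩⟩
  · refine le_antisymm ?_ (phiRp_le_slopeR _ _ h k)
    rw [heq]
    exact le_iInf fun p => le_iInf fun q => hlow p q
  all_goals
    rintro rfl
    have := heq ▸ hnonneg (by tauto)
    exact absurd (EReal.coe_nonneg.1 this) hφ0.not_ge

/-- After a long step in a steepest descent direction, every slope at
`ŷ = y + λ(χ_i - χ_j)` is at least `φ_ℝ(y)`; if a slope at `ŷ` equals `φ_ℝ(y)`, then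
the corresponding direction `+χ_h - χ_k` is a steepest descent direction at `ŷ`
and satisfies `k ≠ i` and `h ≠ j`. -/
theorem statement16 {n : ℕ} (hn : 1 ≤ n) (f : (Fin n → ℝ) → EReal)
    (hbot : NoBotR f) (hM : PolyMConvex f) (hbdd : BddDomR f)
    (y : Fin n → ℝ) (hy : f y ≠ ⊤) (hphi : phiRp f y < 0)
    (i j : Fin n) (hij : i ≠ j) (hd : slopeR f y i j = phiRp f y)
    (lam : ℝ) (hlam : 0 < lam)
    (hstep : f (y + lam • (chiR i - chiR j)) - f y = (lam : EReal) * phiRp f y) :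
    ∀ h k : Fin n, h ≠ k →
      phiRp f y ≤ slopeR f (y + lam • (chiR i - chiR j)) h k ∧
      (slopeR f (y + lam • (chiR i - chiR j)) h k = phiRp f y →
        slopeR f (y + lam • (chiR i - chiR j)) h k =
            phiRp f (y + lam • (chiR i - chiR j)) ∧
          k ≠ i ∧ h ≠ j) :=
  statement16_general f hbot hM hbdd y hy hphi i j lam hlam hstep
end
end
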